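/- arXiv:2407.16949 — 9 statements merged into one kernel-verified Lean document; each statement's English description precedes it below -/
import Mathlib

section
/- For α ∈ (0,1), define f_α : (0,∞) → ℝ by f_α(z) = (1/(1+α²))·( Σ_{ℓ=1}^∞ (z^{ℓ−1} e^{−z}/(ℓ−1)!)·( Σ_{ω=ℓ}^∞ α^ω(1−α)/ω ) + (1−α)e^{−z} ) + (1/(1+α²))·Σ_{ω=2}^∞ α^ω(1−α)(1+(ω−1)α)·e^{−(1+(ω−1)α)z}, where all series converge absolutely. Then there is no γ > 0 such that f_α(z) = γ·e^{−γz} for all z > 0. -/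
open scoped BigOperators

private lemma real_exp_tsum (x : ℝ) : Real.exp x = ∑' n : ℕ, x ^ n / n.factorial := by
  rw [Real.exp_eq_exp_ℝ, NormedSpace.exp_eq_tsum_div]

private lemma exp_ge_sq_quarter {x : ℝ} (hx : 0 ≤ x) : x ^ 2 / 4 ≤ Real.exp x := by
  have h2 : Real.exp x = Real.exp (x / 2) * Real.exp (x / 2) := by
    rw [← Real.exp_add]; ring_nf
  have h3 : x / 2 ≤ Real.exp (x / 2) := by
    have := Real.add_one_le_exp (x / 2); linarith
  nlinarith [Real.exp_pos (x / 2)]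

private lemma summable_Q {α : ℝ} (z : ℝ) (hz : 0 < z) :
    Summable (fun n : ℕ => α ^ (n + 1) * z ^ n / (n + 1).factorial) := by
  have h := (summable_nat_add_iff 1).2 (Real.summable_pow_div_factorial (α * z))
  refine (h.mul_left (1 / z)).congr fun n => ?_
  have hfac : ((n + 1).factorial : ℝ) ≠ 0 := by positivity
  field_simp
  ring

private lemma tsum_Q {α : ℝ} (z : ℝ) (hz : 0 < z) :
    ∑' n : ℕ, α ^ (n + 1) * z ^ n / (n + 1).factorial = (Real.exp (α * z) - 1) / z := by
  have hsum := Real.summable_pow_div_factorial (α * z)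
  have h0 := Summable.tsum_eq_zero_add hsum
  rw [← real_exp_tsum] at h0
  have h1 : ∑' n : ℕ, (α * z) ^ (n + 1) / ((n + 1).factorial : ℝ)
      = z * ∑' n : ℕ, α ^ (n + 1) * z ^ n / (n + 1).factorial := by
    rw [← tsum_mul_left]
    congr 1; funext n
    have hfac : ((n + 1).factorial : ℝ) ≠ 0 := by positivity
    field_simp; ring
  simp only [pow_zero, Nat.factorial_zero, Nat.cast_one] at h0
  rw [h1] at h0
  field_simp
  linarith

private lemma inner_summable {α : ℝ} (hα0 : 0 ≤ α) (hα1 : α < 1) (n : ℕ) :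
    Summable (fun m : ℕ => α ^ (n + 1 + m) * (1 - α) / ((n : ℝ) + 1 + (m : ℝ))) := by
  have h1a : (0:ℝ) ≤ 1 - α := by linarith
  refine Summable.of_nonneg_of_le (fun m => ?_) (fun m => ?_)
    ((summable_geometric_of_lt_one hα0 hα1).mul_left (α ^ (n + 1)))
  · have hd : (0:ℝ) < (n : ℝ) + 1 + (m : ℝ) := by positivity
    positivity
  · have hm : (0:ℝ) ≤ (m : ℝ) := Nat.cast_nonneg m
    have hn : (0:ℝ) ≤ (n : ℝ) := Nat.cast_nonneg n
    have hd : (1:ℝ) ≤ (n : ℝ) + 1 + (m : ℝ) := by linarith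
    have h1 : α ^ (n + 1 + m) * (1 - α) / ((n : ℝ) + 1 + (m : ℝ)) ≤ α ^ (n + 1 + m) * (1 - α) :=
      div_le_self (by positivity) hd
    have h2 : α ^ (n + 1 + m) * (1 - α) ≤ α ^ (n + 1) * α ^ m := by
      rw [pow_add]
      nlinarith [mul_nonneg (mul_nonneg (pow_nonneg hα0 (n+1)) (pow_nonneg hα0 m)) hα0]
    linarith

private lemma inner_nonneg {α : ℝ} (hα0 : 0 ≤ α) (hα1 : α < 1) (n m : ℕ) :
    0 ≤ α ^ (n + 1 + m) * (1 - α) / ((n : ℝ) + 1 + (m : ℝ)) := by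
  have h1a : (0:ℝ) ≤ 1 - α := by linarith
  have hd : (0:ℝ) < (n : ℝ) + 1 + (m : ℝ) := by positivity
  positivity

private lemma inner_le {α : ℝ} (hα0 : 0 ≤ α) (hα1 : α < 1) (n : ℕ) :
    ∑' m : ℕ, α ^ (n + 1 + m) * (1 - α) / ((n : ℝ) + 1 + (m : ℝ))
      ≤ α ^ (n + 1) / ((n : ℝ) + 1) := by
  have h1a : (0:ℝ) < 1 - α := by linarith
  have hsg : Summable (fun m : ℕ => (α ^ (n + 1) * (1 - α) / ((n : ℝ) + 1)) * α ^ m) :=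
    (summable_geometric_of_lt_one hα0 hα1).mul_left _
  have hle : ∀ m : ℕ, α ^ (n + 1 + m) * (1 - α) / ((n : ℝ) + 1 + (m : ℝ))
      ≤ (α ^ (n + 1) * (1 - α) / ((n : ℝ) + 1)) * α ^ m := by
    intro m
    have h1 : α ^ (n + 1 + m) * (1 - α) / ((n : ℝ) + 1 + (m : ℝ))
        ≤ α ^ (n + 1 + m) * (1 - α) / ((n : ℝ) + 1) := by
      have hm : (0:ℝ) ≤ (m : ℝ) := Nat.cast_nonneg m
      exact div_le_div_of_nonneg_left (by positivity) (by positivity) (by linarith)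
    have h2 : α ^ (n + 1 + m) * (1 - α) / ((n : ℝ) + 1)
        = (α ^ (n + 1) * (1 - α) / ((n : ℝ) + 1)) * α ^ m := by
      rw [pow_add]; ring
    linarith
  have := Summable.tsum_le_tsum hle (inner_summable hα0 hα1 n) hsg
  rw [tsum_mul_left, tsum_geometric_of_lt_one hα0 hα1] at this
  have hne : (1 - α) ≠ 0 := ne_of_gt h1a
  have hn1 : ((n : ℝ) + 1) ≠ 0 := by positivity
  calc ∑' m : ℕ, α ^ (n + 1 + m) * (1 - α) / ((n : ℝ) + 1 + (m : ℝ))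
      ≤ α ^ (n + 1) * (1 - α) / ((n : ℝ) + 1) * (1 - α)⁻¹ := this
    _ = α ^ (n + 1) / ((n : ℝ) + 1) := by field_simp

private lemma inner_ge {α : ℝ} (hα0 : 0 ≤ α) (hα1 : α < 1) (n : ℕ) :
    (1 - α) * α ^ (n + 1) / ((n : ℝ) + 1)
      ≤ ∑' m : ℕ, α ^ (n + 1 + m) * (1 - α) / ((n : ℝ) + 1 + (m : ℝ)) := by
  have h := Summable.le_tsum (inner_summable hα0 hα1 n) 0 (fun j _ => inner_nonneg hα0 hα1 n j)
  simp only [Nat.add_zero, Nat.cast_zero, add_zero] at h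
  calc (1 - α) * α ^ (n + 1) / ((n : ℝ) + 1) = α ^ (n + 1) * (1 - α) / ((n : ℝ) + 1) := by
        ring
    _ ≤ _ := h

private lemma fact_succ_cast (n : ℕ) : (((n + 1).factorial : ℝ)) = ((n : ℝ) + 1) * n.factorial := by
  push_cast [Nat.factorial_succ]
  ring

private lemma outer_term_ub {α z : ℝ} (hα0 : 0 ≤ α) (hα1 : α < 1) (hz : 0 < z) (n : ℕ) :
    (z ^ n * Real.exp (-z) / n.factorial) *
      (∑' m : ℕ, α ^ (n + 1 + m) * (1 - α) / ((n : ℝ) + 1 + (m : ℝ)))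
    ≤ Real.exp (-z) * (α ^ (n + 1) * z ^ n / (n + 1).factorial) := by
  have hterm : (0:ℝ) ≤ z ^ n * Real.exp (-z) / n.factorial := by positivity
  have h := mul_le_mul_of_nonneg_left (inner_le hα0 hα1 n) hterm
  calc (z ^ n * Real.exp (-z) / n.factorial) *
        (∑' m : ℕ, α ^ (n + 1 + m) * (1 - α) / ((n : ℝ) + 1 + (m : ℝ)))
      ≤ (z ^ n * Real.exp (-z) / n.factorial) * (α ^ (n + 1) / ((n : ℝ) + 1)) := h
    _ = Real.exp (-z) * (α ^ (n + 1) * z ^ n / (n + 1).factorial) := by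
        rw [fact_succ_cast n]
        have h1 : ((n : ℝ) + 1) ≠ 0 := by positivity
        have h2 : ((n.factorial : ℝ)) ≠ 0 := by positivity
        field_simp

private lemma outer_term_lb {α z : ℝ} (hα0 : 0 ≤ α) (hα1 : α < 1) (hz : 0 < z) (n : ℕ) :
    Real.exp (-z) * ((1 - α) * (α ^ (n + 1) * z ^ n / (n + 1).factorial))
    ≤ (z ^ n * Real.exp (-z) / n.factorial) *
      (∑' m : ℕ, α ^ (n + 1 + m) * (1 - α) / ((n : ℝ) + 1 + (m : ℝ))) := by
  have hterm : (0:ℝ) ≤ z ^ n * Real.exp (-z) / n.factorial := by positivity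
  have h := mul_le_mul_of_nonneg_left (inner_ge hα0 hα1 n) hterm
  calc Real.exp (-z) * ((1 - α) * (α ^ (n + 1) * z ^ n / (n + 1).factorial))
      = (z ^ n * Real.exp (-z) / n.factorial) * ((1 - α) * α ^ (n + 1) / ((n : ℝ) + 1)) := by
        rw [fact_succ_cast n]
        have h1 : ((n : ℝ) + 1) ≠ 0 := by positivity
        have h2 : ((n.factorial : ℝ)) ≠ 0 := by positivity
        field_simp
    _ ≤ _ := h

private lemma outer_nonneg {α z : ℝ} (hα0 : 0 ≤ α) (hα1 : α < 1) (hz : 0 < z) (n : ℕ) :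
    0 ≤ (z ^ n * Real.exp (-z) / n.factorial) *
      (∑' m : ℕ, α ^ (n + 1 + m) * (1 - α) / ((n : ℝ) + 1 + (m : ℝ))) := by
  have h1 : (0:ℝ) ≤ z ^ n * Real.exp (-z) / n.factorial := by positivity
  exact mul_nonneg h1 (tsum_nonneg (inner_nonneg hα0 hα1 n))

private lemma outer_summable {α z : ℝ} (hα0 : 0 ≤ α) (hα1 : α < 1) (hz : 0 < z) :
    Summable (fun n : ℕ => (z ^ n * Real.exp (-z) / n.factorial) *
      (∑' m : ℕ, α ^ (n + 1 + m) * (1 - α) / ((n : ℝ) + 1 + (m : ℝ)))) :=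
  Summable.of_nonneg_of_le (outer_nonneg hα0 hα1 hz) (outer_term_ub hα0 hα1 hz)
    ((summable_Q z hz).mul_left (Real.exp (-z)))

private lemma T_ub {α z : ℝ} (hα0 : 0 ≤ α) (hα1 : α < 1) (hz : 0 < z) :
    ∑' n : ℕ, (z ^ n * Real.exp (-z) / n.factorial) *
      (∑' m : ℕ, α ^ (n + 1 + m) * (1 - α) / ((n : ℝ) + 1 + (m : ℝ)))
    ≤ Real.exp (-z) * ((Real.exp (α * z) - 1) / z) := by
  have h := Summable.tsum_le_tsum (outer_term_ub hα0 hα1 hz) (outer_summable hα0 hα1 hz)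
    ((summable_Q z hz).mul_left (Real.exp (-z)))
  rwa [tsum_mul_left, tsum_Q z hz] at h

private lemma T_lb {α z : ℝ} (hα0 : 0 ≤ α) (hα1 : α < 1) (hz : 0 < z) :
    Real.exp (-z) * ((1 - α) * ((Real.exp (α * z) - 1) / z))
    ≤ ∑' n : ℕ, (z ^ n * Real.exp (-z) / n.factorial) *
      (∑' m : ℕ, α ^ (n + 1 + m) * (1 - α) / ((n : ℝ) + 1 + (m : ℝ))) := by
  have hs : Summable (fun n : ℕ =>
      Real.exp (-z) * ((1 - α) * (α ^ (n + 1) * z ^ n / (n + 1).factorial))) :=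
    ((summable_Q z hz).mul_left (1 - α)).mul_left (Real.exp (-z))
  have h := Summable.tsum_le_tsum (outer_term_lb hα0 hα1 hz) hs (outer_summable hα0 hα1 hz)
  rwa [tsum_mul_left, tsum_mul_left, tsum_Q z hz] at h

private lemma a_nonneg {α : ℝ} (hα0 : 0 ≤ α) (hα1 : α < 1) (k : ℕ) :
    0 ≤ α ^ (k + 2) * (1 - α) * (1 + ((k : ℝ) + 1) * α) := by
  have h1 : (0:ℝ) ≤ 1 - α := by linarith
  have h2 : (0:ℝ) ≤ (k : ℝ) + 1 := by positivity
  have h3 : (0:ℝ) ≤ 1 + ((k : ℝ) + 1) * α := by nlinarith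
  positivity

private lemma summable_a {α : ℝ} (hα0 : 0 < α) (hα1 : α < 1) :
    Summable (fun k : ℕ => α ^ (k + 2) * (1 - α) * (1 + ((k : ℝ) + 1) * α)) := by
  have h1 : Summable (fun k : ℕ => α ^ k) := summable_geometric_of_lt_one hα0.le hα1
  have h2 : Summable (fun k : ℕ => (k : ℝ) ^ 1 * α ^ k) :=
    summable_pow_mul_geometric_of_norm_lt_one 1
      (by rw [Real.norm_eq_abs, abs_of_pos hα0]; exact hα1)
  refine ((h1.mul_left ((1 - α) * (1 + α) * α ^ 2)).add
    (h2.mul_left ((1 - α) * α ^ 3))).congr fun k => ?_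
  ring

private lemma E_term_ub {α z : ℝ} (hα0 : 0 ≤ α) (hα1 : α < 1) (hz : 0 < z) (k : ℕ) :
    α ^ (k + 2) * (1 - α) * (1 + ((k : ℝ) + 1) * α) * Real.exp (-(1 + ((k : ℝ) + 1) * α) * z)
    ≤ α ^ (k + 2) * (1 - α) * (1 + ((k : ℝ) + 1) * α) * Real.exp (-z) := by
  have hk : (0:ℝ) ≤ (k : ℝ) + 1 := by positivity
  have hexp : Real.exp (-(1 + ((k : ℝ) + 1) * α) * z) ≤ Real.exp (-z) := by
    apply Real.exp_le_exp.2
    nlinarith [mul_nonneg (mul_nonneg hk hα0) hz.le]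
  exact mul_le_mul_of_nonneg_left hexp (a_nonneg hα0 hα1 k)

private lemma E_summable {α z : ℝ} (hα0 : 0 < α) (hα1 : α < 1) (hz : 0 < z) :
    Summable (fun k : ℕ => α ^ (k + 2) * (1 - α) * (1 + ((k : ℝ) + 1) * α) *
      Real.exp (-(1 + ((k : ℝ) + 1) * α) * z)) := by
  refine Summable.of_nonneg_of_le (fun k => ?_) (E_term_ub hα0.le hα1 hz)
    ((summable_a hα0 hα1).mul_right (Real.exp (-z)))
  exact mul_nonneg (a_nonneg hα0.le hα1 k) (Real.exp_pos _).le

private lemma E_ub {α z : ℝ} (hα0 : 0 < α) (hα1 : α < 1) (hz : 0 < z) :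
    ∑' k : ℕ, α ^ (k + 2) * (1 - α) * (1 + ((k : ℝ) + 1) * α) *
      Real.exp (-(1 + ((k : ℝ) + 1) * α) * z)
    ≤ (∑' k : ℕ, α ^ (k + 2) * (1 - α) * (1 + ((k : ℝ) + 1) * α)) * Real.exp (-z) := by
  have h := Summable.tsum_le_tsum (E_term_ub hα0.le hα1 hz) (E_summable hα0 hα1 hz)
    ((summable_a hα0 hα1).mul_right (Real.exp (-z)))
  rwa [tsum_mul_right] at h

private lemma E_nonneg {α z : ℝ} (hα0 : 0 < α) (hα1 : α < 1) (hz : 0 < z) :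
    0 ≤ ∑' k : ℕ, α ^ (k + 2) * (1 - α) * (1 + ((k : ℝ) + 1) * α) *
      Real.exp (-(1 + ((k : ℝ) + 1) * α) * z) :=
  tsum_nonneg fun k => mul_nonneg (a_nonneg hα0.le hα1 k) (Real.exp_pos _).le

/-- The density of the winning score in a random round of CSSP when an adversary with an
`α` fraction of the stake plays the 1-Lookahead strategy.  Here the outer index `n`
corresponds to the shape `ℓ = n + 1` of an Erlang density `z^(ℓ-1) e^(-z)/(ℓ-1)!`, the
inner index `m` corresponds to `ω = ℓ + m`, and in the final series the index `k`
corresponds to `ω = k + 2`. -/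
noncomputable def oneLookaheadDensity (α z : ℝ) : ℝ :=
  (1 / (1 + α ^ 2)) *
      ((∑' n : ℕ, (z ^ n * Real.exp (-z) / n.factorial) *
          (∑' m : ℕ, α ^ (n + 1 + m) * (1 - α) / ((n : ℝ) + 1 + (m : ℝ)))) +
        (1 - α) * Real.exp (-z)) +
    (1 / (1 + α ^ 2)) *
      ∑' k : ℕ,
        α ^ (k + 2) * (1 - α) * (1 + ((k : ℝ) + 1) * α) *
          Real.exp (-(1 + ((k : ℝ) + 1) * α) * z)

private lemma density_lb {α : ℝ} (hα0 : 0 < α) (hα1 : α < 1) {z : ℝ} (hz : 0 < z) :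
    ((1 / (1 + α ^ 2)) * ((1 - α) * ((Real.exp (α * z) - 1) / z))) * Real.exp (-z)
      ≤ oneLookaheadDensity α z := by
  unfold oneLookaheadDensity
  have hA : (0:ℝ) < 1 / (1 + α ^ 2) := by positivity
  have h1a : (0:ℝ) < 1 - α := by linarith
  have hT := T_lb hα0.le hα1 hz
  have hE := E_nonneg hα0 hα1 hz
  have f1 := mul_le_mul_of_nonneg_left hT hA.le
  have f2 := mul_nonneg hA.le hE
  have f3 : (0:ℝ) ≤ (1 / (1 + α ^ 2)) * ((1 - α) * Real.exp (-z)) :=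
    mul_nonneg hA.le (mul_nonneg h1a.le (Real.exp_pos _).le)
  nlinarith [f1, f2, f3]

private lemma density_ub {α : ℝ} (hα0 : 0 < α) (hα1 : α < 1) {z : ℝ} (hz : 0 < z) :
    oneLookaheadDensity α z
      ≤ ((1 / (1 + α ^ 2)) * ((Real.exp (α * z) - 1) / z + (1 - α) +
          (∑' k : ℕ, α ^ (k + 2) * (1 - α) * (1 + ((k : ℝ) + 1) * α)))) * Real.exp (-z) := by
  unfold oneLookaheadDensity
  have hA : (0:ℝ) < 1 / (1 + α ^ 2) := by positivity
  have hT := T_ub hα0.le hα1 hz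
  have hE := E_ub hα0 hα1 hz
  have f1 := mul_le_mul_of_nonneg_left hT hA.le
  have f2 := mul_le_mul_of_nonneg_left hE hA.le
  nlinarith [f1, f2]

set_option maxHeartbeats 1000000 in
/-- The winning-score density under the 1-Lookahead strategy is not an exponential
density `γ e^(-γ z)` for any rate `γ > 0`: the strategy fails the distribution test. -/
theorem stmt_2 (α : ℝ) (hα0 : 0 < α) (hα1 : α < 1) :
    ¬ ∃ γ : ℝ, 0 < γ ∧ ∀ z : ℝ, 0 < z →
      oneLookaheadDensity α z = γ * Real.exp (-γ * z) := by
  rintro ⟨γ, hγ, h⟩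
  have hA : (0:ℝ) < 1 / (1 + α ^ 2) := by positivity
  set A : ℝ := 1 / (1 + α ^ 2) with hA_def
  set S : ℝ := ∑' k : ℕ, α ^ (k + 2) * (1 - α) * (1 + ((k : ℝ) + 1) * α) with hS_def
  have hS0 : 0 ≤ S := tsum_nonneg (a_nonneg hα0.le hα1)
  have h1a : (0:ℝ) < 1 - α := by linarith
  have key : ∀ z : ℝ, 0 < z →
      A * ((1 - α) * ((Real.exp (α * z) - 1) / z)) ≤ γ * Real.exp ((1 - γ) * z) ∧
      γ * Real.exp ((1 - γ) * z) ≤ A * ((Real.exp (α * z) - 1) / z + (1 - α) + S) := by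
    intro z hz
    have hlb := density_lb hα0 hα1 hz
    have hub := density_ub hα0 hα1 hz
    rw [h z hz] at hlb hub
    have harg : (1 - γ) * z + -z = -γ * z := by ring
    have hsplit : γ * Real.exp (-γ * z) = (γ * Real.exp ((1 - γ) * z)) * Real.exp (-z) := by
      rw [mul_assoc, ← Real.exp_add, harg]
    rw [hsplit] at hlb hub
    exact ⟨le_of_mul_le_mul_right hlb (Real.exp_pos _),
           le_of_mul_le_mul_right hub (Real.exp_pos _)⟩
  clear_value A S
  by_cases hcase : 1 - γ < α
  · -- the rate γ is too large: the lower bound grows like exp(αz)/z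
    set δ : ℝ := α - (1 - γ) with hδ_def
    have hδ0 : 0 < δ := by simp only [hδ_def]; linarith
    have hAA : (0:ℝ) < A * (1 - α) := mul_pos hA h1a
    set K : ℝ := 2 * γ / (A * (1 - α)) with hK_def
    have hK0 : 0 < K := by positivity
    set z : ℝ := max (1 / α) (4 * (K + 1) / δ ^ 2) with hz_def
    have hz0 : 0 < z := lt_of_lt_of_le (by positivity) (le_max_left _ _)
    have hz1 : 1 / α ≤ z := le_max_left _ _
    have hz2 : 4 * (K + 1) / δ ^ 2 ≤ z := le_max_right _ _
    obtain ⟨hlow, -⟩ := key z hz0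
    have hαz : 1 ≤ α * z := by
      rw [div_le_iff₀ hα0] at hz1
      linarith [hz1]
    have h2exp : 2 ≤ Real.exp (α * z) := by
      have := Real.add_one_le_exp (α * z); linarith
    set Y : ℝ := Real.exp ((1 - γ) * z) with hY_def
    have hY0 : 0 < Y := Real.exp_pos _
    set W : ℝ := Real.exp (δ * z) with hW_def
    have hW0 : 0 < W := Real.exp_pos _
    have hXY : Real.exp (α * z) = W * Y := by
      rw [hW_def, hY_def, ← Real.exp_add]
      congr 1; ring
    clear_value δ K z Y W
    rw [hXY] at hlow h2exp
    -- clear the division by z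
    have h3 : A * ((1 - α) * (W * Y - 1)) ≤ γ * Y * z := by
      have hmul := mul_le_mul_of_nonneg_right hlow hz0.le
      have heq : A * ((1 - α) * ((W * Y - 1) / z)) * z = A * ((1 - α) * (W * Y - 1)) := by
        field_simp
      rw [heq] at hmul
      linarith [hmul]
    have h4 : A * (1 - α) * (W * Y) ≤ 2 * (γ * Y * z) := by
      have hWY : W * Y / 2 ≤ W * Y - 1 := by linarith
      nlinarith [mul_le_mul_of_nonneg_left hWY hAA.le, h3]
    have h5 : (A * (1 - α) * W) * Y ≤ (2 * γ * z) * Y := by nlinarith [h4]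
    have h6 : A * (1 - α) * W ≤ 2 * γ * z := le_of_mul_le_mul_right h5 hY0
    have h7 : W ≤ K * z := by
      rw [hK_def, div_mul_eq_mul_div, le_div_iff₀ hAA]
      nlinarith [h6]
    have h8 : (δ * z) ^ 2 / 4 ≤ W := by
      rw [hW_def]
      exact exp_ge_sq_quarter (mul_nonneg hδ0.le hz0.le)
    have h9 : 4 * (K + 1) ≤ z * δ ^ 2 := by
      rw [div_le_iff₀ (by positivity : (0:ℝ) < δ ^ 2)] at hz2
      linarith [hz2]
    linarith [mul_le_mul_of_nonneg_right h9 hz0.le, h7, h8, hz0]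
  · -- the rate γ is too small: the upper bound decays like exp(βz)/z + const
    push_neg at hcase
    set β : ℝ := 1 - γ with hβ_def
    have hβ0 : 0 < β := lt_of_lt_of_le hα0 hcase
    set C : ℝ := (1 - α) + S with hC_def
    have hC0 : 0 < C := by positivity
    set z : ℝ := max (2 * A / γ) (2 * A * C / (γ * β) + 1) with hz_def
    have hz0 : 0 < z := lt_of_lt_of_le (by positivity) (le_max_left _ _)
    have hz1 : 2 * A / γ ≤ z := le_max_left _ _
    have hz2 : 2 * A * C / (γ * β) + 1 ≤ z := le_max_right _ _
    obtain ⟨-, hup⟩ := key z hz0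
    set Y : ℝ := Real.exp (β * z) with hY_def
    have hY0 : 0 < Y := Real.exp_pos _
    clear_value β C z Y
    have hXY : Real.exp (α * z) ≤ Y := by
      rw [hY_def]
      exact Real.exp_le_exp.2 (mul_le_mul_of_nonneg_right hcase hz0.le)
    have hdiv : (Real.exp (α * z) - 1) / z ≤ Y / z := by
      gcongr
      linarith
    have hup' : γ * Y ≤ A * (Y / z + C) := by
      have hmono : (Real.exp (α * z) - 1) / z + (1 - α) + S ≤ Y / z + C := by
        rw [hC_def]; linarith
      calc γ * Y ≤ A * ((Real.exp (α * z) - 1) / z + (1 - α) + S) := hup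
        _ ≤ A * (Y / z + C) := mul_le_mul_of_nonneg_left hmono hA.le
    have haz : A / z ≤ γ / 2 := by
      rw [div_le_iff₀ hz0]
      have h2Aγ : 2 * A ≤ γ * z := by
        rw [div_le_iff₀ hγ] at hz1
        linarith [hz1]
      linarith
    have hhalf : (γ / 2) * Y ≤ A * C := by
      have f := mul_le_mul_of_nonneg_right haz hY0.le
      have heq : A * (Y / z + C) = (A / z) * Y + A * C := by ring
      rw [heq] at hup'
      linarith [f, hup']
    have hYge : 2 * A * C / γ + β + 1 ≤ Y := by
      have hbz : β * (2 * A * C / (γ * β) + 1) ≤ β * z :=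
        mul_le_mul_of_nonneg_left hz2 hβ0.le
      have hq : β * (2 * A * C / (γ * β) + 1) = 2 * A * C / γ + β := by
        field_simp
      have hY1 : β * z + 1 ≤ Y := by
        have := Real.add_one_le_exp (β * z); linarith
      linarith [hbz, hq, hY1]
    have hfin := mul_le_mul_of_nonneg_left hYge (by positivity : (0:ℝ) ≤ γ / 2)
    have heq2 : (γ / 2) * (2 * A * C / γ) = A * C := by
      field_simp
    nlinarith [hfin, hhalf, heq2, mul_pos hγ hβ0, hγ]
end

section
/- For every α ∈ (0,1) there is no γ > 0 such that for every integer ℓ ≥ 1, γ²(1−γ)^{ℓ−1} = (α^ℓ(1−α)/(1+α²))·( 1/ℓ + Σ_{ω=2}^∞ α^{ω−1}(1−ω)^{ℓ−1}(1+(ω−1)α)² ). -/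
/-!
Take `ℓ = j + 1` with `j` odd. Then `(1 - ω)^j < 0` for every `ω ≥ 2`, so the right-hand
side is at most `C - C α^(2j+2) (j+1)^j` with `C = (1-α)/(1+α²)`, keeping only the term
`ω = j + 2` of the series. The left-hand side is at least `-γ² max(1, |1-γ|)^j`, and the
superexponential growth of `(α²(j+1))^j` contradicts this for large odd `j`.
-/

open Filter

lemma summable_succ_pow_mul_pow_succ {α : ℝ} (hα : |α| < 1) (m : ℕ) :
    Summable fun k : ℕ => ((k : ℝ) + 1) ^ m * α ^ (k + 1) := by
  have h := (summable_nat_add_iff 1).2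
    (summable_pow_mul_geometric_of_norm_lt_one m (by rwa [Real.norm_eq_abs]) :
      Summable fun n : ℕ => (n : ℝ) ^ m * α ^ n)
  exact h.congr fun k => by push_cast; rfl

lemma summable_pow_mul_succ_pow_mul_sq {α : ℝ} (hα : |α| < 1) (m : ℕ) :
    Summable fun k : ℕ =>
      α ^ (k + 1) * ((k : ℝ) + 1) ^ m * (1 + ((k : ℝ) + 1) * α) ^ 2 := by
  have s := summable_succ_pow_mul_pow_succ hα
  exact (((s m).add ((s (m + 1)).mul_left (2 * α))).add ((s (m + 2)).mul_left (α ^ 2))).congr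
    fun k => by ring

lemma tsum_neg_pow_le_of_odd {α : ℝ} (hα0 : 0 ≤ α) (hα1 : α < 1) {j : ℕ} (hj : Odd j) :
    ∑' k : ℕ, α ^ (k + 1) * (-((k : ℝ) + 1)) ^ j * (1 + ((k : ℝ) + 1) * α) ^ 2 ≤
      -(α ^ (j + 1) * ((j : ℝ) + 1) ^ j) := by
  set g : ℕ → ℝ := fun k =>
    α ^ (k + 1) * ((k : ℝ) + 1) ^ j * (1 + ((k : ℝ) + 1) * α) ^ 2
  have hg : Summable g := summable_pow_mul_succ_pow_mul_sq (abs_lt.2 ⟨by linarith, hα1⟩) j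
  have hg0 : ∀ k, 0 ≤ g k := fun k => by positivity
  simp only [hj.neg_pow, mul_neg, neg_mul, tsum_neg, neg_le_neg_iff]
  calc α ^ (j + 1) * ((j : ℝ) + 1) ^ j ≤ g j :=
        le_mul_of_one_le_right (by positivity)
          (one_le_pow₀ (by nlinarith [j.cast_nonneg (α := ℝ)]))
    _ ≤ ∑' k, g k := hg.le_tsum j fun k _ => hg0 k

lemma eventually_mul_pow_lt_mul_pow_mul_succ {a c M : ℝ} (ha : 0 < a) (hc : 0 < c)
    (hM : 0 < M) (B : ℝ) :
    ∀ᶠ n : ℕ in atTop, B * M ^ n < c * (a * ((n : ℝ) + 1)) ^ n := by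
  have hlin : ∀ᶠ n : ℕ in atTop, 2 * M ≤ a * ((n : ℝ) + 1) :=
    ((tendsto_natCast_atTop_atTop.atTop_add tendsto_const_nhds).const_mul_atTop
      ha).eventually_ge_atTop _
  have hexp : ∀ᶠ n : ℕ in atTop, B < c * 2 ^ n :=
    ((tendsto_pow_atTop_atTop_of_one_lt one_lt_two).const_mul_atTop hc).eventually_gt_atTop B
  filter_upwards [hlin, hexp] with n hlin hexp
  calc B * M ^ n < c * 2 ^ n * M ^ n := by gcongr
    _ = c * (2 * M) ^ n := by ring
    _ ≤ c * (a * ((n : ℝ) + 1)) ^ n := by gcongr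

/-- There is no `γ > 0` matching, for every `ℓ ≥ 1`, the Taylor coefficient identity
`γ²(1-γ)^(ℓ-1) = (α^ℓ(1-α)/(1+α²))·(1/ℓ + Σ_{ω=2}^∞ α^(ω-1)(1-ω)^(ℓ-1)(1+(ω-1)α)²)`
(below the series index `k` corresponds to `ω = k + 2`, so `ω - 1 = k + 1` and
`1 - ω = -(k+1)`). -/
theorem stmt_3 (α : ℝ) (hα0 : 0 < α) (hα1 : α < 1) :
    ¬ ∃ γ : ℝ, 0 < γ ∧ ∀ ℓ : ℕ, 1 ≤ ℓ →
      γ ^ 2 * (1 - γ) ^ (ℓ - 1) =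
        (α ^ ℓ * (1 - α) / (1 + α ^ 2)) *
          (1 / (ℓ : ℝ) +
            ∑' k : ℕ,
              α ^ (k + 1) * (-((k : ℝ) + 1)) ^ (ℓ - 1) * (1 + ((k : ℝ) + 1) * α) ^ 2) := by
  rintro ⟨γ, -, h⟩
  set C : ℝ := (1 - α) / (1 + α ^ 2)
  have hC : 0 < C := div_pos (by linarith) (by positivity)
  set M : ℝ := max 1 |1 - γ|
  obtain ⟨j, hj, hbig⟩ : ∃ j : ℕ, Odd j ∧
      (C + γ ^ 2) * M ^ j < C * α ^ 2 * (α ^ 2 * ((j : ℝ) + 1)) ^ j := by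
    obtain ⟨N, hN⟩ := eventually_atTop.1 <| eventually_mul_pow_lt_mul_pow_mul_succ
      (c := C * α ^ 2) (M := M) (pow_pos hα0 2) (by positivity)
      (one_pos.trans_le (le_max_left _ _)) (C + γ ^ 2)
    exact ⟨2 * N + 1, odd_two_mul_add_one N, hN (2 * N + 1) (by omega)⟩
  have hℓ := h (j + 1) (by omega)
  rw [Nat.add_sub_cancel, mul_div_assoc] at hℓ
  push_cast at hℓ
  set T := ∑' k : ℕ, α ^ (k + 1) * (-((k : ℝ) + 1)) ^ j * (1 + ((k : ℝ) + 1) * α) ^ 2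
  have hT : α ^ (j + 1) * C * T ≤ -(C * α ^ 2 * (α ^ 2 * ((j : ℝ) + 1)) ^ j) := by
    have := mul_le_mul_of_nonneg_left (tsum_neg_pow_le_of_odd hα0.le hα1 hj)
      (by positivity : 0 ≤ α ^ (j + 1) * C)
    rw [mul_pow, ← pow_mul]
    linarith [show α ^ (j + 1) * C * (α ^ (j + 1) * ((j : ℝ) + 1) ^ j) =
      C * α ^ 2 * (α ^ (2 * j) * ((j : ℝ) + 1) ^ j) by ring]
  have hfirst : α ^ (j + 1) * C * (1 / ((j : ℝ) + 1)) ≤ C := by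
    have : α ^ (j + 1) * (1 / ((j : ℝ) + 1)) ≤ 1 :=
      mul_le_one₀ (pow_le_one₀ hα0.le hα1.le) (by positivity)
        (div_le_one_of_le₀ (by linarith [j.cast_nonneg (α := ℝ)]) (by positivity))
    calc _ = C * (α ^ (j + 1) * (1 / ((j : ℝ) + 1))) := by ring
      _ ≤ C := mul_le_of_le_one_right hC.le this
  have hlhs : -(γ ^ 2 * M ^ j) ≤ γ ^ 2 * (1 - γ) ^ j := by
    have : -(M ^ j) ≤ (1 - γ) ^ j := (abs_le.1 ((abs_pow (1 - γ) j).trans_le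
      (pow_le_pow_left₀ (abs_nonneg _) (le_max_right 1 _) j))).1
    nlinarith [sq_nonneg γ]
  have hMj : 1 ≤ M ^ j := one_le_pow₀ (le_max_left _ _)
  nlinarith
end

section
/- For every α ∈ (0,1) and every even integer ℓ with ℓ > 1/α, the absolutely convergent sum 1/ℓ + Σ_{ω=2}^∞ α^{ω−1}(1−ω)^{ℓ−1}(1+(ω−1)α)² is strictly negative. -/
/-- For `α ∈ (0,1)` and any even integer `ℓ > 1/α`, the sum
`1/ℓ + Σ_{ω=2}^∞ α^(ω-1)(1-ω)^(ℓ-1)(1+(ω-1)α)²` is strictly negative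
(the series index `k` corresponds to `ω = k + 2`). -/
theorem stmt_4 (α : ℝ) (hα0 : 0 < α) (hα1 : α < 1)
    (ℓ : ℕ) (hℓeven : Even ℓ) (hℓ : 1 / α < (ℓ : ℝ)) :
    1 / (ℓ : ℝ) +
        ∑' k : ℕ,
          α ^ (k + 1) * (-((k : ℝ) + 1)) ^ (ℓ - 1) * (1 + ((k : ℝ) + 1) * α) ^ 2 < 0 := by
  have hℓR : (0:ℝ) < (ℓ:ℝ) := lt_trans (by positivity) hℓ
  have hℓpos : 0 < ℓ := by exact_mod_cast hℓR
  have hodd : Odd (ℓ - 1) := Nat.Even.sub_odd hℓpos hℓeven odd_one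
  set g : ℕ → ℝ := fun k => α ^ (k+1) * ((k:ℝ)+1) ^ (ℓ-1) * (1 + ((k:ℝ)+1)*α)^2 with hg
  have hfg : ∀ k : ℕ, α ^ (k + 1) * (-((k : ℝ) + 1)) ^ (ℓ - 1) * (1 + ((k : ℝ) + 1) * α) ^ 2
      = -(g k) := by
    intro k
    rw [hodd.neg_pow]
    simp [hg]
  have hgnn : ∀ k, 0 ≤ g k := by
    intro k
    have : (0:ℝ) ≤ (k:ℝ) := Nat.cast_nonneg k
    positivity
  have hb : Summable (fun k : ℕ => (1+α)^2 * (((k:ℝ)+1)^(ℓ+1) * α^(k+1))) := by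
    apply Summable.mul_left
    have h1 : Summable (fun n : ℕ => (n:ℝ)^(ℓ+1) * α^n) :=
      summable_pow_mul_geometric_of_norm_lt_one (ℓ+1)
        (by rw [Real.norm_eq_abs, abs_of_pos hα0]; exact hα1)
    have h2 := (summable_nat_add_iff 1).2 h1
    refine h2.congr fun n => ?_
    push_cast
    ring
  have hgs : Summable g := by
    refine Summable.of_nonneg_of_le hgnn ?_ hb
    intro k
    have hk : (0:ℝ) ≤ (k:ℝ) := Nat.cast_nonneg k
    have h1 : (1 + ((k:ℝ)+1)*α) ≤ ((k:ℝ)+1)*(1+α) := by nlinarith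
    have h2 : (1 + ((k:ℝ)+1)*α)^2 ≤ (((k:ℝ)+1)*(1+α))^2 := by
      apply pow_le_pow_left₀ (by positivity) h1
    calc g k ≤ α ^ (k+1) * ((k:ℝ)+1)^(ℓ-1) * (((k:ℝ)+1)*(1+α))^2 := by
          exact mul_le_mul_of_nonneg_left h2 (by positivity)
      _ = (1+α)^2 * (((k:ℝ)+1)^((ℓ-1)+2) * α^(k+1)) := by rw [pow_add]; ring
      _ = (1+α)^2 * (((k:ℝ)+1)^(ℓ+1) * α^(k+1)) := by
          rw [show (ℓ-1)+2 = ℓ+1 by omega]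
  have hsum : (∑' k : ℕ, α ^ (k + 1) * (-((k : ℝ) + 1)) ^ (ℓ - 1) * (1 + ((k : ℝ) + 1) * α) ^ 2)
      = -(∑' k, g k) := by
    rw [← tsum_neg]
    exact tsum_congr fun k => hfg k
  have hle : g 0 ≤ ∑' k, g k := Summable.le_tsum hgs 0 (fun j _ => hgnn j)
  have hg0 : α ≤ g 0 := by
    simp only [hg]
    norm_num
    nlinarith [mul_pos hα0 hα0, sq_nonneg α]
  have hα' : 1/(ℓ:ℝ) < α := by
    rw [div_lt_iff₀ hℓR]
    rw [div_lt_iff₀ hα0] at hℓ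
    nlinarith
  rw [hsum]
  linarith
end

section
/- For every α ∈ (0,1), every integer ω* ≥ 3, and every even integer ℓ with ℓ > 1/α, one has |1/ℓ + Σ_{ω=2}^∞ α^{ω−1}(1−ω)^{ℓ−1}(1+(ω−1)α)²| ≥ α^{ω*−1}·(ω*−1)^{ℓ−1}·(1+(ω*−1)α)². -/
private lemma summable_aux (α : ℝ) (hα0 : 0 < α) (hα1 : α < 1) (n : ℕ) :
    Summable (fun k : ℕ => ((k : ℝ) + 1) ^ n * α ^ (k + 1)) := by
  have h : ‖α‖ < 1 := by rw [Real.norm_eq_abs, abs_of_pos hα0]; exact hα1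
  have h1 := (summable_pow_mul_geometric_of_norm_lt_one n h).comp_injective
    Nat.succ_injective
  refine h1.congr fun k => ?_
  simp [Nat.succ_eq_add_one]

/-- For `α ∈ (0,1)`, any integer `ω* ≥ 3` and any even integer `ℓ > 1/α`,
`|1/ℓ + Σ_{ω=2}^∞ α^(ω-1)(1-ω)^(ℓ-1)(1+(ω-1)α)²| ≥ α^(ω*-1)·(ω*-1)^(ℓ-1)·(1+(ω*-1)α)²`
(the series index `k` corresponds to `ω = k + 2`). -/
theorem stmt_5 (α : ℝ) (hα0 : 0 < α) (hα1 : α < 1)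
    (ωs : ℕ) (hωs : 3 ≤ ωs)
    (ℓ : ℕ) (hℓeven : Even ℓ) (hℓ : 1 / α < (ℓ : ℝ)) :
    α ^ (ωs - 1) * ((ωs : ℝ) - 1) ^ (ℓ - 1) * (1 + ((ωs : ℝ) - 1) * α) ^ 2 ≤
      |1 / (ℓ : ℝ) +
        ∑' k : ℕ,
          α ^ (k + 1) * (-((k : ℝ) + 1)) ^ (ℓ - 1) * (1 + ((k : ℝ) + 1) * α) ^ 2| := by
  have hα1' : (1 : ℝ) < 1 / α := by
    rw [lt_div_iff₀ hα0]; linarith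
  have hℓ1 : (1 : ℝ) < (ℓ : ℝ) := lt_trans hα1' hℓ
  have hℓ2 : 2 ≤ ℓ := by exact_mod_cast Nat.one_lt_cast.mp hℓ1 |>.nat_succ_le.trans_eq rfl
  have hℓpos : (0 : ℝ) < (ℓ : ℝ) := by linarith
  have hodd : Odd (ℓ - 1) := by
    rcases hℓeven with ⟨m, hm⟩
    refine ⟨m - 1, ?_⟩
    omega
  -- f k : the positive terms
  set f : ℕ → ℝ := fun k => α ^ (k + 1) * ((k : ℝ) + 1) ^ (ℓ - 1) * (1 + ((k : ℝ) + 1) * α) ^ 2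
    with hf
  have hfnn : ∀ k, 0 ≤ f k := fun k => by positivity
  have hℓsub : ℓ - 1 + 1 = ℓ := by omega
  have hfsum : Summable f := by
    have h1 := summable_aux α hα0 hα1 (ℓ - 1)
    have h2 := summable_aux α hα0 hα1 ℓ
    have h3 := summable_aux α hα0 hα1 (ℓ + 1)
    have := (h1.add ((h2.mul_left (2 * α)).add (h3.mul_left (α ^ 2))))
    obtain ⟨m, hm⟩ : ∃ m, ℓ = m + 1 := ⟨ℓ - 1, by omega⟩
    refine this.congr fun k => ?_
    simp only [hf, hm, Nat.add_sub_cancel]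
    ring
  -- rewrite the tsum
  have hterm : ∀ k : ℕ,
      α ^ (k + 1) * (-((k : ℝ) + 1)) ^ (ℓ - 1) * (1 + ((k : ℝ) + 1) * α) ^ 2 = -f k := by
    intro k
    rw [hodd.neg_pow]
    simp only [hf]; ring
  rw [tsum_congr hterm, tsum_neg]
  -- bound the abs
  have h1ℓα : 1 / (ℓ : ℝ) < α := by
    rw [div_lt_iff₀ hℓpos]
    rw [div_lt_iff₀ hα0] at hℓ
    linarith
  -- lower bound on the sum: f 0 + f (ωs - 2) ≤ tsum f
  have hne : (0 : ℕ) ≠ ωs - 2 := by omega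
  have hsum2 : f 0 + f (ωs - 2) ≤ ∑' k, f k := by
    have := Summable.sum_le_tsum ({0, ωs - 2} : Finset ℕ) (fun k _ => hfnn k) hfsum
    rwa [Finset.sum_pair hne] at this
  have hf0 : α ≤ f 0 := by
    have h0 : f 0 = α * (1 + α) ^ 2 := by simp [hf]
    rw [h0]; nlinarith [mul_pos hα0 hα0, mul_pos (mul_pos hα0 hα0) hα0]
  have hfωs : f (ωs - 2) =
      α ^ (ωs - 1) * ((ωs : ℝ) - 1) ^ (ℓ - 1) * (1 + ((ωs : ℝ) - 1) * α) ^ 2 := by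
    simp only [hf]
    have h1 : ωs - 2 + 1 = ωs - 1 := by omega
    have h2 : ((ωs - 2 : ℕ) : ℝ) + 1 = (ωs : ℝ) - 1 := by
      have : (2 : ℕ) ≤ ωs := by omega
      push_cast [Nat.cast_sub this]
      ring
    rw [h1, h2]
  have key : α ^ (ωs - 1) * ((ωs : ℝ) - 1) ^ (ℓ - 1) * (1 + ((ωs : ℝ) - 1) * α) ^ 2 ≤
      (∑' k, f k) - 1 / (ℓ : ℝ) := by
    rw [← hfωs]
    linarith
  calc α ^ (ωs - 1) * ((ωs : ℝ) - 1) ^ (ℓ - 1) * (1 + ((ωs : ℝ) - 1) * α) ^ 2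
      ≤ (∑' k, f k) - 1 / (ℓ : ℝ) := key
    _ ≤ |(∑' k, f k) - 1 / (ℓ : ℝ)| := le_abs_self _
    _ = |1 / (ℓ : ℝ) + -∑' k, f k| := by rw [abs_sub_comm, sub_eq_add_neg]
end

section
/- Let (Ω, F, P) be a probability space, let A ∈ F be an event with 0 < P(A) < 1, let Z and Z' be real-valued random variables, and fix real numbers a, b. Assume: (i) conditional independence of Z and Z' given A and given its complement, i.e. P({Z' > b} ∩ {Z > a} ∩ A) = P(Z' > b | A)·P({Z > a} ∩ A) and P({Z' > b} ∩ {Z > a} ∩ Aᶜ) = P(Z' > b | Aᶜ)·P({Z > a} ∩ Aᶜ); (ii) P(Z > a) > 0 and P(Z > a | A) > P(Z > a | Aᶜ); (iii) P(Z' > b | A) < P(Z' > b | Aᶜ). Then P(Z' > b | Z > a) < P(Z' > b). -/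
open MeasureTheory

/-- Negative-correlation lemma: if `Z` and `Z'` are conditionally independent given the
event `A` and given `Aᶜ` (at the thresholds `a`, `b`), `Z > a` is more likely given `A`
than given `Aᶜ`, while `Z' > b` is less likely given `A` than given `Aᶜ`, then
`P(Z' > b | Z > a) < P(Z' > b)`.  Conditional probabilities `P(E | A)` are written as
ratios `P(E ∩ A)/P(A)`. -/
theorem stmt_8 {Ω : Type*} [MeasurableSpace Ω] (μ : Measure Ω) [IsProbabilityMeasure μ]
    (A : Set Ω) (hA : MeasurableSet A) (Z Z' : Ω → ℝ) (a b : ℝ)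
    (hA0 : 0 < (μ A).toReal) (hA1 : (μ A).toReal < 1)
    (hci1 : (μ ({ω | b < Z' ω} ∩ {ω | a < Z ω} ∩ A)).toReal =
      (μ ({ω | b < Z' ω} ∩ A)).toReal / (μ A).toReal * (μ ({ω | a < Z ω} ∩ A)).toReal)
    (hci2 : (μ ({ω | b < Z' ω} ∩ {ω | a < Z ω} ∩ Aᶜ)).toReal =
      (μ ({ω | b < Z' ω} ∩ Aᶜ)).toReal / (μ Aᶜ).toReal * (μ ({ω | a < Z ω} ∩ Aᶜ)).toReal)
    (hZpos : 0 < (μ {ω | a < Z ω}).toReal)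
    (hZcmp : (μ ({ω | a < Z ω} ∩ Aᶜ)).toReal / (μ Aᶜ).toReal <
      (μ ({ω | a < Z ω} ∩ A)).toReal / (μ A).toReal)
    (hZ'cmp : (μ ({ω | b < Z' ω} ∩ A)).toReal / (μ A).toReal <
      (μ ({ω | b < Z' ω} ∩ Aᶜ)).toReal / (μ Aᶜ).toReal) :
    (μ ({ω | b < Z' ω} ∩ {ω | a < Z ω})).toReal / (μ {ω | a < Z ω}).toReal <
      (μ {ω | b < Z' ω}).toReal := by

  set S := {ω | a < Z ω} with hSdef
  set T := {ω | b < Z' ω} with hTdef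
  have hpq : (μ A).toReal + (μ Aᶜ).toReal = 1 := by
    rw [← ENNReal.toReal_add (measure_ne_top μ _) (measure_ne_top μ _),
      measure_add_measure_compl hA]
    simp
  have hq0 : 0 < (μ Aᶜ).toReal := by linarith
  have hsplit : ∀ s : Set Ω, (μ s).toReal = (μ (s ∩ A)).toReal + (μ (s ∩ Aᶜ)).toReal := by
    intro s
    rw [← ENNReal.toReal_add (measure_ne_top μ _) (measure_ne_top μ _)]
    congr 1
    rw [← measure_inter_add_diff s hA, Set.diff_eq]
  have hS := hsplit S
  rw [hsplit T, hsplit (T ∩ S), hci1, hci2, hS] at *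
  set p := (μ A).toReal
  set q := (μ Aᶜ).toReal
  set x := (μ (S ∩ A)).toReal
  set x' := (μ (S ∩ Aᶜ)).toReal
  set u := (μ (T ∩ A)).toReal
  set u' := (μ (T ∩ Aᶜ)).toReal
  rw [div_lt_iff₀ (show (0:ℝ) < x + x' by rw [← hsplit S]; exact hZpos)]
  have h1 : u * q < u' * p := (div_lt_div_iff₀ hA0 hq0).mp hZ'cmp
  have h2 : x' * p < x * q := (div_lt_div_iff₀ hq0 hA0).mp hZcmp
  have hprod : 0 < (u' * p - u * q) * (x * q - x' * p) :=
    mul_pos (by linarith) (by linarith)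
  have key : u / p * x + u' / q * x' < (u + u') * (x + x') := by
    rw [div_mul_eq_mul_div, div_mul_eq_mul_div, div_add_div _ _ (ne_of_gt hA0) (ne_of_gt hq0),
      div_lt_iff₀ (mul_pos hA0 hq0)]
    have hq1 : q = 1 - p := by linarith
    rw [hq1] at h1 h2 ⊢
    nlinarith [mul_pos (sub_pos.mpr h1) (sub_pos.mpr h2)]
  linarith [key]
end

section
/- Let α ∈ (0,1) and γ > 0. Let X and Y be independent real-valued random variables on a probability space such that X is distributed Exp(1−α), Y ≥ 0 almost surely, and min(X, Y) is distributed Exp(γ). If P[Y < X] > α, then γ > 1 and Y is distributed Exp(α + (γ−1)); in particular, Y is distributed Exp(α + ε) for some ε > 0. -/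
/-!
By independence the survival function of `min X Y` is the product of those of `X` and `Y`, so
`Y` has survival function `e^{-a z}` with `a = γ - (1 - α)`. Cutting the range of `Y` into the
intervals `[n h, (n + 1) h)` bounds `P[Y < X]` by a geometric series with sum
`(1 - e^{-a h}) / (1 - e^{-γ h})`, which tends to `a / γ` as `h → 0⁺`. So profitability gives
`α γ < a = α + γ - 1`, i.e. `(1 - α) (γ - 1) > 0`.
-/

open MeasureTheory ProbabilityTheory Filter Topology Set Real

def HasExpSurvival {Ω : Type*} [MeasurableSpace Ω] (μ : Measure Ω) (Y : Ω → ℝ) (a : ℝ) : Prop :=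
  ∀ z : ℝ, 0 ≤ z → (μ {ω | z ≤ Y ω}).toReal = exp (-a * z)

lemma setOf_lt_subset_iUnion_Ico {Ω : Type*} {X Y : Ω → ℝ} {h : ℝ} (hh : 0 < h) :
    {ω | Y ω < X ω} ⊆
      (⋃ n : ℕ, Y ⁻¹' Ico (n * h) ((n + 1) * h) ∩ X ⁻¹' Ici (n * h)) ∪ {ω | Y ω < 0} := by
  intro ω hω
  rcases lt_or_ge (Y ω) 0 with hneg | hpos
  · exact Or.inr hneg
  · have hlo : (⌊Y ω / h⌋₊ : ℝ) * h ≤ Y ω := (le_div_iff₀ hh).1 (Nat.floor_le (by positivity))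
    have hhi : Y ω < (⌊Y ω / h⌋₊ + 1) * h := (div_lt_iff₀ hh).1 (Nat.lt_floor_add_one _)
    exact Or.inl (mem_iUnion.2 ⟨⌊Y ω / h⌋₊, ⟨hlo, hhi⟩, hlo.trans (le_of_lt hω)⟩)

lemma tendsto_one_sub_exp_neg_mul_div (c : ℝ) :
    Tendsto (fun h ↦ (1 - exp (-c * h)) / h) (𝓝[≠] 0) (𝓝 c) := by
  have hd : HasDerivAt (fun x ↦ 1 - exp (-c * x)) c 0 := by
    simpa using (((hasDerivAt_id (0 : ℝ)).const_mul (-c)).exp).const_sub 1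
  refine (hasDerivAt_iff_tendsto_slope_zero.1 hd).congr fun h ↦ ?_
  simp only [zero_add, mul_zero, exp_zero, smul_eq_mul]
  ring

lemma tendsto_one_sub_exp_div_one_sub_exp (a : ℝ) {c : ℝ} (hc : c ≠ 0) :
    Tendsto (fun h ↦ (1 - exp (-a * h)) / (1 - exp (-c * h))) (𝓝[≠] 0) (𝓝 (a / c)) := by
  refine ((tendsto_one_sub_exp_neg_mul_div a).div (tendsto_one_sub_exp_neg_mul_div c) hc).congr' ?_
  filter_upwards [self_mem_nhdsWithin] with h hh
  exact div_div_div_cancel_right₀ hh _ _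

namespace HasExpSurvival

variable {Ω : Type*} [MeasurableSpace Ω] {μ : Measure Ω} {X Y : Ω → ℝ} {a b γ : ℝ}

lemma rate_nonneg [IsProbabilityMeasure μ] (hY : HasExpSurvival μ Y a) : 0 ≤ a := by
  have h1 : exp (-a * 1) ≤ 1 := hY 1 zero_le_one ▸ measureReal_le_one
  linarith [exp_le_one_iff.1 h1]

lemma measure_preimage_Ici [IsFiniteMeasure μ] (hY : HasExpSurvival μ Y a) {z : ℝ} (hz : 0 ≤ z) :
    μ (Y ⁻¹' Ici z) = ENNReal.ofReal (exp (-a * z)) := by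
  rw [← hY z hz, ENNReal.ofReal_toReal (measure_ne_top μ _)]
  rfl

lemma measure_preimage_Ico [IsFiniteMeasure μ] (hY : HasExpSurvival μ Y a) (hYm : Measurable Y)
    {s t : ℝ} (hs : 0 ≤ s) (hst : s ≤ t) :
    μ (Y ⁻¹' Ico s t) = ENNReal.ofReal (exp (-a * s) - exp (-a * t)) := by
  rw [← Ici_sdiff_Ici, preimage_sdiff,
    measure_sdiff (preimage_mono (Ici_subset_Ici.2 hst)) (hYm measurableSet_Ici).nullMeasurableSet
      (measure_ne_top μ _),
    hY.measure_preimage_Ici hs, hY.measure_preimage_Ici (hs.trans hst),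
    ENNReal.ofReal_sub _ (exp_pos _).le]

lemma of_indepFun_min (hindep : IndepFun X Y μ) (hX : HasExpSurvival μ X b)
    (hmin : HasExpSurvival μ (fun ω ↦ min (X ω) (Y ω)) γ) : HasExpSurvival μ Y (γ - b) := by
  intro z hz
  have hset : {ω | z ≤ min (X ω) (Y ω)} = X ⁻¹' Ici z ∩ Y ⁻¹' Ici z := by
    ext ω
    simp
  have hprod : exp (-γ * z) = exp (-b * z) * (μ {ω | z ≤ Y ω}).toReal := by
    rw [← hmin z hz, ← hX z hz, hset,
      hindep.measure_inter_preimage_eq_mul _ _ measurableSet_Ici measurableSet_Ici,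
      ENNReal.toReal_mul]
    rfl
  rw [show -(γ - b) * z = -γ * z - -b * z by ring, exp_sub, hprod,
    mul_div_cancel_left₀ _ (exp_ne_zero _)]

lemma measure_lt_le_geometric [IsProbabilityMeasure μ] (hindep : IndepFun X Y μ)
    (hYm : Measurable Y) (hY0 : ∀ᵐ ω ∂μ, 0 ≤ Y ω) (hX : HasExpSurvival μ X b)
    (hY : HasExpSurvival μ Y a) (hab : 0 < a + b) {h : ℝ} (hh : 0 < h) :
    (μ {ω | Y ω < X ω}).toReal ≤ (1 - exp (-a * h)) / (1 - exp (-(a + b) * h)) := by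
  have ha : 0 ≤ a := hY.rate_nonneg
  set r := exp (-(a + b) * h)
  set c := 1 - exp (-a * h)
  have hr0 : 0 ≤ r := (exp_pos _).le
  have hr1 : r < 1 := exp_lt_one_iff.2 (by nlinarith)
  have hc : 0 ≤ c := sub_nonneg.2 (exp_le_one_iff.2 (by nlinarith))
  set B : ℕ → Set Ω := fun n ↦ Y ⁻¹' Ico (n * h) ((n + 1) * h) ∩ X ⁻¹' Ici (n * h)
  have hB : ∀ n : ℕ, μ (B n) = ENNReal.ofReal (c * r ^ n) := by
    intro n
    have hnh : (0 : ℝ) ≤ n * h := by positivity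
    rw [hindep.symm.measure_inter_preimage_eq_mul _ _ measurableSet_Ico measurableSet_Ici,
      hY.measure_preimage_Ico hYm hnh (by nlinarith), hX.measure_preimage_Ici hnh,
      ← ENNReal.ofReal_mul (sub_nonneg.2 (exp_le_exp.2 (by nlinarith))),
      ← exp_nat_mul, show -a * ((n + 1) * h) = -a * (n * h) + -a * h by ring,
      show n * (-(a + b) * h) = -a * (n * h) + -b * (n * h) by ring, exp_add, exp_add]
    simp only [c]
    congr 1
    ring
  have hnull : μ {ω | Y ω < 0} = 0 := by simpa only [not_le] using ae_iff.1 hY0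
  have hsum : μ {ω | Y ω < X ω} ≤ ENNReal.ofReal (c * (1 - r)⁻¹) :=
    calc μ {ω | Y ω < X ω} ≤ μ ((⋃ n, B n) ∪ {ω | Y ω < 0}) :=
          measure_mono (setOf_lt_subset_iUnion_Ico hh)
      _ ≤ μ (⋃ n, B n) + μ {ω | Y ω < 0} := measure_union_le _ _
      _ ≤ ∑' n, μ (B n) := by rw [hnull, add_zero]; exact measure_iUnion_le _
      _ = ∑' n : ℕ, ENNReal.ofReal (c * r ^ n) := tsum_congr hB
      _ = ENNReal.ofReal (c * (1 - r)⁻¹) := by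
        rw [← ENNReal.ofReal_tsum_of_nonneg (fun n ↦ by positivity)
          ((summable_geometric_of_lt_one hr0 hr1).mul_left c), tsum_mul_left,
          tsum_geometric_of_lt_one hr0 hr1]
  exact ENNReal.toReal_le_of_le_ofReal (div_nonneg hc (by linarith)) hsum

lemma measure_lt_le_div [IsProbabilityMeasure μ] (hindep : IndepFun X Y μ)
    (hYm : Measurable Y) (hY0 : ∀ᵐ ω ∂μ, 0 ≤ Y ω) (hX : HasExpSurvival μ X b)
    (hY : HasExpSurvival μ Y a) (hab : 0 < a + b) :
    (μ {ω | Y ω < X ω}).toReal ≤ a / (a + b) := by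
  refine ge_of_tendsto ((tendsto_one_sub_exp_div_one_sub_exp a hab.ne').mono_left
    (nhdsWithin_mono 0 (fun _ hh ↦ ne_of_gt hh : Ioi (0 : ℝ) ⊆ {0}ᶜ))) ?_
  filter_upwards [self_mem_nhdsWithin] with h hh
  exact measure_lt_le_geometric hindep hYm hY0 hX hY hab hh

end HasExpSurvival

theorem stmt_9_general {Ω : Type*} [MeasurableSpace Ω] (μ : Measure Ω) [IsProbabilityMeasure μ]
    (α γ : ℝ) (hα1 : α < 1) (hγ : 0 < γ)
    (X Y : Ω → ℝ) (hYm : Measurable Y)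
    (hindep : ProbabilityTheory.IndepFun X Y μ)
    (hX : ∀ z : ℝ, 0 ≤ z → (μ {ω | z ≤ X ω}).toReal = Real.exp (-(1 - α) * z))
    (hY0 : ∀ᵐ ω ∂μ, 0 ≤ Y ω)
    (hmin : ∀ z : ℝ, 0 ≤ z →
      (μ {ω | z ≤ min (X ω) (Y ω)}).toReal = Real.exp (-γ * z))
    (hprofit : α < (μ {ω | Y ω < X ω}).toReal) :
    1 < γ ∧
      (∀ z : ℝ, 0 ≤ z → (μ {ω | z ≤ Y ω}).toReal = Real.exp (-(α + (γ - 1)) * z)) ∧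
      ∃ ε : ℝ, 0 < ε ∧
        ∀ z : ℝ, 0 ≤ z → (μ {ω | z ≤ Y ω}).toReal = Real.exp (-(α + ε) * z) := by
  have hYexp : HasExpSurvival μ Y (α + (γ - 1)) := by
    rw [show α + (γ - 1) = γ - (1 - α) by ring]
    exact HasExpSurvival.of_indepFun_min hindep hX hmin
  have hP : (μ {ω | Y ω < X ω}).toReal ≤ (α + (γ - 1)) / γ := by
    have := HasExpSurvival.measure_lt_le_div hindep hYm hY0 hX hYexp (by linarith)
    rwa [show α + (γ - 1) + (1 - α) = γ by ring] at this
  have hγ1 : 1 < γ := by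
    have := (lt_div_iff₀ hγ).1 (hprofit.trans_le hP)
    nlinarith
  exact ⟨hγ1, hYexp, γ - 1, sub_pos.2 hγ1, hYexp⟩

/-- If `X ~ Exp(1-α)` and `Y ≥ 0` are independent with `min(X,Y) ~ Exp(γ)` (distributions
expressed via survival functions `P[Z ≥ z] = e^(-λ z)` for `z ≥ 0`), and the adversary is
strictly profitable, i.e. `P[Y < X] > α`, then `γ > 1` and `Y ~ Exp(α + (γ-1))`;
in particular `Y ~ Exp(α + ε)` for some `ε > 0`. -/
theorem stmt_9 {Ω : Type*} [MeasurableSpace Ω] (μ : Measure Ω) [IsProbabilityMeasure μ]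
    (α γ : ℝ) (hα0 : 0 < α) (hα1 : α < 1) (hγ : 0 < γ)
    (X Y : Ω → ℝ) (hXm : Measurable X) (hYm : Measurable Y)
    (hindep : ProbabilityTheory.IndepFun X Y μ)
    (hX : ∀ z : ℝ, 0 ≤ z → (μ {ω | z ≤ X ω}).toReal = Real.exp (-(1 - α) * z))
    (hY0 : ∀ᵐ ω ∂μ, 0 ≤ Y ω)
    (hmin : ∀ z : ℝ, 0 ≤ z →
      (μ {ω | z ≤ min (X ω) (Y ω)}).toReal = Real.exp (-γ * z))
    (hprofit : α < (μ {ω | Y ω < X ω}).toReal) :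
    1 < γ ∧
      (∀ z : ℝ, 0 ≤ z → (μ {ω | z ≤ Y ω}).toReal = Real.exp (-(α + (γ - 1)) * z)) ∧
      ∃ ε : ℝ, 0 < ε ∧
        ∀ z : ℝ, 0 ≤ z → (μ {ω | z ≤ Y ω}).toReal = Real.exp (-(α + ε) * z) :=
  stmt_9_general μ α γ hα1 hγ X Y hYm hindep hX hY0 hmin hprofit
end

section
/- Let α > 0, ε > 0, and p ∈ (0,1]. Let μ₁ and μ₂ be Borel probability measures on ℝ such that μ₁([z, ∞)) ≥ e^{−αz} for all z ≥ 0. Then the mixture p·μ₁ + (1−p)·μ₂ is not the exponential distribution with rate α + ε; that is, it is not the case that (p·μ₁ + (1−p)·μ₂)([z, ∞)) = e^{−(α+ε)z} for all z ≥ 0. -/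
/-!
The mixture's survival function at `z` is at least `p·e^{-αz}`, so an `Exp(α+ε)` mixture
would force `p ≤ e^{-εz}` for every `z ≥ 0`; but `e^{-εz} → 0`, while `p > 0`.
-/

open MeasureTheory Filter

lemma Real.exists_nonneg_exp_neg_mul_lt {ε p : ℝ} (hε : 0 < ε) (hp : 0 < p) :
    ∃ z : ℝ, 0 ≤ z ∧ Real.exp (-ε * z) < p := by
  have hlim : Tendsto (fun z : ℝ => Real.exp (-ε * z)) atTop (nhds 0) :=
    Real.tendsto_exp_atBot.comp (tendsto_id.const_mul_atTop_of_neg (neg_lt_zero.mpr hε))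
  exact ((eventually_ge_atTop 0).and (hlim.eventually (gt_mem_nhds hp))).exists

theorem stmt_10_general (α ε : ℝ) (hε : 0 < ε) (p : ℝ) (hp0 : 0 < p) (hp1 : p ≤ 1)
    (μ₁ μ₂ : Measure ℝ)
    (h₁ : ∀ z : ℝ, 0 ≤ z → Real.exp (-α * z) ≤ (μ₁ (Set.Ici z)).toReal) :
    ¬ ∀ z : ℝ, 0 ≤ z →
      p * (μ₁ (Set.Ici z)).toReal + (1 - p) * (μ₂ (Set.Ici z)).toReal =
        Real.exp (-(α + ε) * z) := by
  intro hmix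
  obtain ⟨z, hz0, hzp⟩ := Real.exists_nonneg_exp_neg_mul_lt hε hp0
  have hμ₂ : 0 ≤ (1 - p) * (μ₂ (Set.Ici z)).toReal :=
    mul_nonneg (sub_nonneg.mpr hp1) ENNReal.toReal_nonneg
  have hbound : p * Real.exp (-α * z) ≤ Real.exp (-ε * z) * Real.exp (-α * z) :=
    calc p * Real.exp (-α * z) ≤ p * (μ₁ (Set.Ici z)).toReal :=
          mul_le_mul_of_nonneg_left (h₁ z hz0) hp0.le
      _ ≤ Real.exp (-(α + ε) * z) := by linarith [hmix z hz0]
      _ = Real.exp (-ε * z) * Real.exp (-α * z) := by rw [← Real.exp_add]; ring_nf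
  linarith [le_of_mul_le_mul_right hbound (Real.exp_pos _)]

/-- If `μ₁` stochastically dominates `Exp(α)` (its survival function is at least
`e^(-αz)` for `z ≥ 0`) and `p > 0`, then the mixture `p·μ₁ + (1-p)·μ₂` is not the
exponential distribution with rate `α + ε`, i.e. its survival function cannot equal
`e^(-(α+ε)z)` for all `z ≥ 0`. -/
theorem stmt_10 (α ε : ℝ) (hα : 0 < α) (hε : 0 < ε) (p : ℝ) (hp0 : 0 < p) (hp1 : p ≤ 1)
    (μ₁ μ₂ : Measure ℝ) [IsProbabilityMeasure μ₁] [IsProbabilityMeasure μ₂]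
    (h₁ : ∀ z : ℝ, 0 ≤ z → Real.exp (-α * z) ≤ (μ₁ (Set.Ici z)).toReal) :
    ¬ ∀ z : ℝ, 0 ≤ z →
      p * (μ₁ (Set.Ici z)).toReal + (1 - p) * (μ₂ (Set.Ici z)).toReal =
        Real.exp (-(α + ε) * z) :=
  stmt_10_general α ε hε p hp0 hp1 μ₁ μ₂ h₁
end

section
/- Let α ∈ (0,1), δ ∈ [0, 1−α), and γ > 0 with λ := γ−1+α+δ(γ+1) > 0. Let X and Y be independent real-valued random variables with Y ≥ 0 almost surely, such that P[Y ≥ z] ≥ e^{−λz} for all z ≥ 0 and P[X > z] ≤ e^{−(1−α−δ)z} for all z ≥ 0. Then P[Y < X] ≤ λ/(λ + (1−α−δ)) = ((1+δ)γ − (1−α−δ))/((1+δ)γ). Consequently, if moreover P[Y < X] > (α+2δ)/(1+δ), then γ > 1. -/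
/-!
Write `λ = γ - 1 + α + δ(γ + 1)` and `b = 1 - α - δ`, so that `λ + b = (1 + δ)γ`.
Conditioning on `Y` and using the tail bound for `X` gives `P[Y < X] ≤ E[e^{-bY}]`. By the layer
cake formula, `1 - E[e^{-bY}] = ∫₀^∞ b e^{-bz} P[Y ≥ z] dz ≥ ∫₀^∞ b e^{-(b+λ)z} dz = b/(λ + b)`,
hence `P[Y < X] ≤ λ/(λ + b) = 1 - b/((1 + δ)γ)`. Since `(α + 2δ)/(1 + δ) = 1 - b/(1 + δ)`,
profitability forces `γ > 1`.
-/
open MeasureTheory Set Real ProbabilityTheory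

lemma integral_mul_exp_neg_mul (b y : ℝ) :
    ∫ t in 0..y, b * exp (-b * t) = 1 - exp (-b * y) := by
  have hderiv : ∀ t ∈ uIcc 0 y, HasDerivAt (fun t => -exp (-b * t)) (b * exp (-b * t)) t :=
    fun t _ => by
      have hlin : HasDerivAt (fun t => -b * t) (-b) t := by
        simpa using (hasDerivAt_id t).const_mul (-b)
      exact hlin.exp.neg.congr_deriv (by ring)
  rw [intervalIntegral.integral_eq_sub_of_hasDerivAt hderiv
    ((by fun_prop : Continuous fun t => b * exp (-b * t)).intervalIntegrable 0 y)]
  simp only [neg_mul, mul_zero, exp_zero, sub_neg_eq_add]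
  ring

lemma lintegral_exp_neg_mul_Ioi {a : ℝ} (ha : 0 < a) :
    ∫⁻ t in Ioi 0, ENNReal.ofReal (exp (-a * t)) = ENNReal.ofReal a⁻¹ := by
  rw [← ofReal_integral_eq_lintegral_ofReal (exp_neg_integrableOn_Ioi 0 ha)
    (ae_of_all _ fun _ => (exp_pos _).le), integral_exp_mul_Ioi (neg_lt_zero.mpr ha)]
  simp

section

variable {Ω : Type*} [MeasurableSpace Ω] {μ : Measure Ω}

theorem ProbabilityTheory.IndepFun.measure_lt_eq_lintegral [IsFiniteMeasure μ] {X Y : Ω → ℝ}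
    (hX : Measurable X) (hY : Measurable Y) (hXY : IndepFun X Y μ) :
    μ {ω | Y ω < X ω} = ∫⁻ ω, μ {ω' | Y ω < X ω'} ∂μ := by
  have hlt : MeasurableSet {p : ℝ × ℝ | p.2 < p.1} :=
    measurableSet_lt measurable_snd measurable_fst
  have htail : Measurable fun y => μ.map X (Ioi y) :=
    Antitone.measurable fun _ _ hyz => measure_mono (Ioi_subset_Ioi hyz)
  calc μ {ω | Y ω < X ω} = μ.map (fun ω => (X ω, Y ω)) {p | p.2 < p.1} :=
        (Measure.map_apply (hX.prodMk hY) hlt).symm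
    _ = ∫⁻ y, μ.map X (Ioi y) ∂(μ.map Y) := by
        rw [(indepFun_iff_map_prod_eq_prod_map_map hX.aemeasurable hY.aemeasurable).mp hXY,
          Measure.prod_apply_symm hlt]
        rfl
    _ = ∫⁻ ω, μ {ω' | Y ω < X ω'} ∂μ := by
        rw [lintegral_map htail hY]
        simp_rw [Measure.map_apply hX measurableSet_Ioi]
        rfl

lemma ofReal_div_le_lintegral_one_sub_exp_neg_mul {L b : ℝ} (hL : 0 < L) (hb : 0 < b)
    {Y : Ω → ℝ} (hYm : Measurable Y) (hY0 : ∀ᵐ ω ∂μ, 0 ≤ Y ω)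
    (hY : ∀ z : ℝ, 0 ≤ z → ENNReal.ofReal (exp (-L * z)) ≤ μ {ω | z ≤ Y ω}) :
    ENNReal.ofReal (b / (L + b)) ≤ ∫⁻ ω, ENNReal.ofReal (1 - exp (-b * Y ω)) ∂μ := by
  have hfactor : ∀ t, ENNReal.ofReal (exp (-L * t)) * ENNReal.ofReal (b * exp (-b * t)) =
      ENNReal.ofReal b * ENNReal.ofReal (exp (-(L + b) * t)) := fun t => by
    rw [← ENNReal.ofReal_mul (exp_pos _).le, ← ENNReal.ofReal_mul hb.le, mul_left_comm,
      ← exp_add]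
    ring_nf
  calc ENNReal.ofReal (b / (L + b))
      = ∫⁻ t in Ioi 0, ENNReal.ofReal (exp (-L * t)) * ENNReal.ofReal (b * exp (-b * t)) := by
        simp_rw [hfactor]
        rw [lintegral_const_mul _ (by fun_prop), lintegral_exp_neg_mul_Ioi (by linarith),
          ← ENNReal.ofReal_mul hb.le, div_eq_mul_inv]
    _ ≤ ∫⁻ t in Ioi 0, μ {ω | t ≤ Y ω} * ENNReal.ofReal (b * exp (-b * t)) :=
        setLIntegral_mono' measurableSet_Ioi fun t ht => by gcongr; exact hY t (le_of_lt ht)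
    _ = ∫⁻ ω, ENNReal.ofReal (∫ t in 0..Y ω, b * exp (-b * t)) ∂μ :=
        (lintegral_comp_eq_lintegral_meas_le_mul μ hY0 hYm.aemeasurable
          (fun _ _ => (by fun_prop : Continuous fun t => b * exp (-b * t)).intervalIntegrable _ _)
          (ae_of_all _ fun _ => by positivity)).symm
    _ = ∫⁻ ω, ENNReal.ofReal (1 - exp (-b * Y ω)) ∂μ := by
        simp_rw [integral_mul_exp_neg_mul]

lemma lintegral_exp_neg_mul_le_of_tail_ge [IsProbabilityMeasure μ] {L b : ℝ} (hL : 0 < L)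
    (hb : 0 < b) {Y : Ω → ℝ} (hYm : Measurable Y) (hY0 : ∀ᵐ ω ∂μ, 0 ≤ Y ω)
    (hY : ∀ z : ℝ, 0 ≤ z → ENNReal.ofReal (exp (-L * z)) ≤ μ {ω | z ≤ Y ω}) :
    ∫⁻ ω, ENNReal.ofReal (exp (-b * Y ω)) ∂μ ≤ ENNReal.ofReal (L / (L + b)) := by
  have hsum : ∫⁻ ω, ENNReal.ofReal (exp (-b * Y ω)) ∂μ
      + ∫⁻ ω, ENNReal.ofReal (1 - exp (-b * Y ω)) ∂μ = 1 := by
    rw [← lintegral_add_left (by fun_prop)]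
    have hpt : ∀ᵐ ω ∂μ, ENNReal.ofReal (exp (-b * Y ω)) + ENNReal.ofReal (1 - exp (-b * Y ω))
        = 1 := by
      filter_upwards [hY0] with ω hω
      have : exp (-b * Y ω) ≤ 1 := exp_le_one_iff.mpr (by nlinarith)
      rw [← ENNReal.ofReal_add (exp_pos _).le (by linarith)]
      simp
    rw [lintegral_congr_ae hpt, lintegral_const, measure_univ, one_mul]
  calc ∫⁻ ω, ENNReal.ofReal (exp (-b * Y ω)) ∂μ
      = 1 - ∫⁻ ω, ENNReal.ofReal (1 - exp (-b * Y ω)) ∂μ :=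
        ENNReal.eq_sub_of_add_eq (ne_top_of_le_ne_top ENNReal.one_ne_top
          (hsum ▸ le_add_self)) hsum
    _ ≤ 1 - ENNReal.ofReal (b / (L + b)) :=
        tsub_le_tsub_left (ofReal_div_le_lintegral_one_sub_exp_neg_mul hL hb hYm hY0 hY) 1
    _ = ENNReal.ofReal (L / (L + b)) := by
        rw [← ENNReal.ofReal_one, ← ENNReal.ofReal_sub _ (by positivity)]
        congr 1
        field_simp
        ring

theorem measure_lt_le_of_exponential_tails [IsProbabilityMeasure μ] {L b : ℝ} (hL : 0 < L)
    (hb : 0 < b) {X Y : Ω → ℝ} (hXm : Measurable X) (hYm : Measurable Y)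
    (hXY : IndepFun X Y μ) (hY0 : ∀ᵐ ω ∂μ, 0 ≤ Y ω)
    (hY : ∀ z : ℝ, 0 ≤ z → exp (-L * z) ≤ (μ {ω | z ≤ Y ω}).toReal)
    (hX : ∀ z : ℝ, 0 ≤ z → (μ {ω | z < X ω}).toReal ≤ exp (-b * z)) :
    (μ {ω | Y ω < X ω}).toReal ≤ L / (L + b) := by
  refine ENNReal.toReal_le_of_le_ofReal (by positivity) ?_
  calc μ {ω | Y ω < X ω} = ∫⁻ ω, μ {ω' | Y ω < X ω'} ∂μ := hXY.measure_lt_eq_lintegral hXm hYm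
    _ ≤ ∫⁻ ω, ENNReal.ofReal (exp (-b * Y ω)) ∂μ := by
        refine lintegral_mono_ae ?_
        filter_upwards [hY0] with ω hω
        exact (ENNReal.le_ofReal_iff_toReal_le (measure_ne_top μ _) (exp_pos _).le).mpr
          (hX _ hω)
    _ ≤ ENNReal.ofReal (L / (L + b)) :=
        lintegral_exp_neg_mul_le_of_tail_ge hL hb hYm hY0
          fun z hz => ENNReal.ofReal_le_of_le_toReal (hY z hz)

end

theorem stmt_12_general {Ω : Type*} [MeasurableSpace Ω] (μ : Measure Ω) [IsProbabilityMeasure μ]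
    (α δ γ : ℝ) (hδ0 : 0 ≤ δ) (hδ1 : δ < 1 - α)
    (hlam : 0 < γ - 1 + α + δ * (γ + 1))
    (X Y : Ω → ℝ) (hXm : Measurable X) (hYm : Measurable Y)
    (hindep : ProbabilityTheory.IndepFun X Y μ)
    (hY0 : ∀ᵐ ω ∂μ, 0 ≤ Y ω)
    (hY : ∀ z : ℝ, 0 ≤ z →
      Real.exp (-(γ - 1 + α + δ * (γ + 1)) * z) ≤ (μ {ω | z ≤ Y ω}).toReal)
    (hX : ∀ z : ℝ, 0 ≤ z → (μ {ω | z < X ω}).toReal ≤ Real.exp (-(1 - α - δ) * z)) :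
    ((μ {ω | Y ω < X ω}).toReal ≤
        (γ - 1 + α + δ * (γ + 1)) / ((γ - 1 + α + δ * (γ + 1)) + (1 - α - δ)) ∧
      (γ - 1 + α + δ * (γ + 1)) / ((γ - 1 + α + δ * (γ + 1)) + (1 - α - δ)) =
        ((1 + δ) * γ - (1 - α - δ)) / ((1 + δ) * γ)) ∧
    ((α + 2 * δ) / (1 + δ) < (μ {ω | Y ω < X ω}).toReal → 1 < γ) := by
  have hb : 0 < 1 - α - δ := by linarith
  have hbound := measure_lt_le_of_exponential_tails hlam hb hXm hYm hindep hY0 hY hX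
  have hsum : (γ - 1 + α + δ * (γ + 1)) + (1 - α - δ) = (1 + δ) * γ := by ring
  have hratio : (γ - 1 + α + δ * (γ + 1)) / ((γ - 1 + α + δ * (γ + 1)) + (1 - α - δ)) =
      ((1 + δ) * γ - (1 - α - δ)) / ((1 + δ) * γ) := by
    rw [hsum]; ring_nf
  refine ⟨⟨hbound, hratio⟩, fun hprofit => ?_⟩
  have h1δ : 0 < 1 + δ := by linarith
  have hlt := hprofit.trans_le (hbound.trans_eq hratio)
  rw [div_lt_div_iff₀ h1δ (hsum ▸ add_pos hlam hb)] at hlt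
  have hkey : 0 < (1 + δ) * (1 - α - δ) * (γ - 1) := by linarith
  linarith [(pos_iff_pos_of_mul_pos hkey).mp (mul_pos h1δ hb)]

/-- Under fluctuating online stake: if `Y ≥ 0` has survival function at least
`e^(-λz)` with `λ = γ-1+α+δ(γ+1) > 0`, `X` has `P[X > z] ≤ e^(-(1-α-δ)z)`, and `X`, `Y`
are independent, then `P[Y < X] ≤ λ/(λ+(1-α-δ)) = ((1+δ)γ-(1-α-δ))/((1+δ)γ)`;
consequently a `2δ`-profitable adversary (`P[Y < X] > (α+2δ)/(1+δ)`) forces `γ > 1`. -/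
theorem stmt_12 {Ω : Type*} [MeasurableSpace Ω] (μ : Measure Ω) [IsProbabilityMeasure μ]
    (α δ γ : ℝ) (hα0 : 0 < α) (hα1 : α < 1) (hδ0 : 0 ≤ δ) (hδ1 : δ < 1 - α) (hγ : 0 < γ)
    (hlam : 0 < γ - 1 + α + δ * (γ + 1))
    (X Y : Ω → ℝ) (hXm : Measurable X) (hYm : Measurable Y)
    (hindep : ProbabilityTheory.IndepFun X Y μ)
    (hY0 : ∀ᵐ ω ∂μ, 0 ≤ Y ω)
    (hY : ∀ z : ℝ, 0 ≤ z →
      Real.exp (-(γ - 1 + α + δ * (γ + 1)) * z) ≤ (μ {ω | z ≤ Y ω}).toReal)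
    (hX : ∀ z : ℝ, 0 ≤ z → (μ {ω | z < X ω}).toReal ≤ Real.exp (-(1 - α - δ) * z)) :
    ((μ {ω | Y ω < X ω}).toReal ≤
        (γ - 1 + α + δ * (γ + 1)) / ((γ - 1 + α + δ * (γ + 1)) + (1 - α - δ)) ∧
      (γ - 1 + α + δ * (γ + 1)) / ((γ - 1 + α + δ * (γ + 1)) + (1 - α - δ)) =
        ((1 + δ) * γ - (1 - α - δ)) / ((1 + δ) * γ)) ∧
    ((α + 2 * δ) / (1 + δ) < (μ {ω | Y ω < X ω}).toReal → 1 < γ) :=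
  stmt_12_general μ α δ γ hδ0 hδ1 hlam X Y hXm hYm hindep hY0 hY hX
end

section
/- Let S be a scoring function, i.e. a function assigning to each credential x ∈ [0,1] and each stake α > 0 a real score S(x, α), measurable in x for each fixed α. Suppose S is balanced: for every n ≥ 1 and all stakes α_1, …, α_n > 0, if X_1, …, X_n are i.i.d. uniform on [0,1], then almost surely the index minimizing S(X_i, α_i) is unique and, for every j, P[argmin_{i ∈ [n]} S(X_i, α_i) = j] = α_j/(α_1 + ⋯ + α_n). Then for every n ≥ 1 and all α_1, …, α_n > 0, the random variables S(X, α_1 + ⋯ + α_n) and min_{1 ≤ i ≤ n} S(X_i, α_i) are identically distributed, where X, X_1, …, X_n are i.i.d. uniform on [0,1]. -/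
/-!
Write `T_a` for the minimum score of accounts with stakes `a` and `μ_a` for its law. By Fubini,
`∫ μ_b [s, ∞) dμ_a(s) = P(T_a ≤ T_b)` for independent `T_a`, `T_b`, and this is the probability
that the winner of the concatenated stake vector `a ++ b` lies in the `a`-block, namely
`Σa / (Σa + Σb)`. Since `μ_b [s, ∞) · μ_b' [s, ∞) = μ_{b ++ b'} [s, ∞)`, if `Σa = Σb` then the
survival functions `G, H` of `μ_a, μ_b` satisfy `∫ G² = ∫ G H = ∫ H² = 1/3` against both `μ_a`
and `μ_b`, so `∫ (G - H)² = 0` and `G = H` almost everywhere for both laws. Taking `b = a` shows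
`P(T_a = T_a') = 0`, so the laws have no atoms; their survival functions are then continuous, and
agreeing almost everywhere for both measures forces them to agree everywhere.
-/

open MeasureTheory

/-- The uniform distribution on `[0,1]`. -/
noncomputable def unif : Measure ℝ := volume.restrict (Set.Icc (0 : ℝ) 1)

open Set Filter Topology
open scoped ENNReal NNReal

lemma ENNReal.two_mul_le_add_mul_self {a b : ℝ≥0∞} (ha : a ≠ ∞) (hb : b ≠ ∞) :
    2 * (a * b) ≤ a * a + b * b := by
  lift a to ℝ≥0 using ha
  lift b to ℝ≥0 using hb
  norm_cast
  rw [← NNReal.coe_le_coe]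
  push_cast
  nlinarith [sq_nonneg ((a : ℝ) - b)]

lemma ENNReal.eq_of_add_mul_self_le {a b : ℝ≥0∞} (ha : a ≠ ∞) (hb : b ≠ ∞)
    (h : a * a + b * b ≤ 2 * (a * b)) : a = b := by
  lift a to ℝ≥0 using ha
  lift b to ℝ≥0 using hb
  norm_cast at h ⊢
  rw [← NNReal.coe_le_coe] at h
  rw [← NNReal.coe_inj]
  push_cast at h
  nlinarith [sq_nonneg ((a : ℝ) - b)]

theorem ae_eq_of_lintegral_mul_self_eq {α : Type*} [MeasurableSpace α] {μ : Measure α}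
    {f g : α → ℝ≥0∞} (hf : Measurable f) (hg : Measurable g) (hf_top : ∀ x, f x ≠ ∞)
    (hg_top : ∀ x, g x ≠ ∞) (hfg : ∫⁻ x, f x * g x ∂μ ≠ ∞)
    (hff : ∫⁻ x, f x * f x ∂μ = ∫⁻ x, f x * g x ∂μ)
    (hgg : ∫⁻ x, g x * g x ∂μ = ∫⁻ x, f x * g x ∂μ) : f =ᵐ[μ] g := by
  have hle x : 2 * (f x * g x) ≤ f x * f x + g x * g x :=
    ENNReal.two_mul_le_add_mul_self (hf_top x) (hg_top x)
  have hgap : ∫⁻ x, (f x * f x + g x * g x) - 2 * (f x * g x) ∂μ = 0 := by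
    rw [lintegral_sub (by fun_prop) (by rw [lintegral_const_mul _ (by fun_prop)]; finiteness)
      (ae_of_all _ hle), lintegral_add_left (by fun_prop), lintegral_const_mul _ (by fun_prop),
      hff, hgg, two_mul, tsub_self]
  filter_upwards [(lintegral_eq_zero_iff (by fun_prop)).1 hgap] with x hx
  exact ENNReal.eq_of_add_mul_self_le (hf_top x) (hg_top x) (tsub_eq_zero_iff_le.1 hx)

theorem continuous_measure_Ici (μ : Measure ℝ) [IsFiniteMeasure μ] [NullSingletonClass μ] :
    Continuous fun t => μ (Ici t) := by
  refine continuous_iff_continuousAt.2 fun b => ?_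
  set m := fun t => μ (Icc (b - |t - b|) (b + |t - b|))
  have hm : Tendsto m (𝓝 b) (𝓝 0) :=
    (tendsto_measure_Icc μ b).comp <| by
      simpa using ((continuous_sub_right b).abs.tendsto b)
  have hcover (s t : ℝ) {r : ℝ} (hs : |s - b| ≤ r) (ht : |t - b| ≤ r) :
      Ici s ⊆ Ici t ∪ Icc (b - r) (b + r) := by
    intro x hx
    simp only [mem_union, mem_Ici, mem_Icc] at *
    by_cases hxt : t ≤ x
    · exact Or.inl hxt
    · right; constructor <;> cases abs_cases (s - b) <;> cases abs_cases (t - b) <;> linarith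
  have hupper t : μ (Ici t) ≤ μ (Ici b) + m t :=
    (measure_mono (hcover t b le_rfl (by simp))).trans (measure_union_le _ _)
  have hlower t : μ (Ici b) - m t ≤ μ (Ici t) :=
    tsub_le_iff_right.2 <| (measure_mono (hcover b t (by simp) le_rfl)).trans (measure_union_le _ _)
  refine tendsto_of_tendsto_of_tendsto_of_le_of_le ?_ ?_ hlower hupper
  · simpa using ENNReal.Tendsto.sub tendsto_const_nhds hm (Or.inl (measure_ne_top _ _))
  · simpa using tendsto_const_nhds.add hm

theorem Measure.eq_of_ae_measure_Ici_eq {μ ν : Measure ℝ} [IsFiniteMeasure μ]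
    [IsFiniteMeasure ν] [NullSingletonClass μ] [NullSingletonClass ν]
    (hμ : ∀ᵐ t ∂μ, μ (Ici t) = ν (Ici t)) (hν : ∀ᵐ t ∂ν, μ (Ici t) = ν (Ici t)) : μ = ν := by
  refine Measure.ext_of_Ici μ ν fun t => ?_
  set E := {s | μ (Ici s) = ν (Ici s)}
  have hnull {A : Set ℝ} (h : A ⊆ Eᶜ) : μ A = 0 ∧ ν A = 0 :=
    ⟨measure_mono_null h (ae_iff.1 hμ), measure_mono_null h (ae_iff.1 hν)⟩
  rcases (E ∩ Ici t).eq_empty_or_nonempty with hempty | hne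
  · have h := hnull fun s hs hsE => hempty.subset ⟨hsE, hs⟩
    rw [h.1, h.2]
  have hbdd : BddBelow (E ∩ Ici t) := ⟨t, fun _ hs => hs.2⟩
  set u := sInf (E ∩ Ici t)
  have hE : IsClosed E := isClosed_eq (continuous_measure_Ici μ) (continuous_measure_Ici ν)
  have hu : u ∈ E ∩ Ici t := (hE.inter isClosed_Ici).csInf_mem hne hbdd
  have hgap := hnull fun s (hs : s ∈ Ico t u) hsE => (csInf_le hbdd ⟨hsE, hs.1⟩).not_gt hs.2
  have hshift (ρ : Measure ℝ) (h : ρ (Ico t u) = 0) : ρ (Ici t) = ρ (Ici u) := by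
    rw [← Ico_union_Ici_eq_Ici hu.2]
    exact le_antisymm ((measure_union_le _ _).trans (by rw [h, zero_add]))
      (measure_mono subset_union_right)
  rw [hshift μ hgap.1, hshift ν hgap.2]
  exact hu.1

theorem lintegral_measure_Ici_eq_prod (μ ν : Measure ℝ) [SFinite ν] :
    ∫⁻ s, ν (Ici s) ∂μ = (μ.prod ν) {p | p.1 ≤ p.2} := by
  rw [Measure.prod_apply (measurableSet_le measurable_fst measurable_snd)]
  rfl

theorem nullSingletonClass_of_prod_le_eq_half (μ : Measure ℝ) [IsProbabilityMeasure μ]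
    (h : (μ.prod μ) {p | p.1 ≤ p.2} = 2⁻¹) : NullSingletonClass μ := by
  have hle : MeasurableSet {p : ℝ × ℝ | p.2 ≤ p.1} := measurableSet_le measurable_snd measurable_fst
  have hswap : (μ.prod μ) {p | p.2 ≤ p.1} = 2⁻¹ := by
    rw [← Measure.prod_swap, Measure.map_apply measurable_swap hle]
    exact h
  have hunion : {p : ℝ × ℝ | p.1 ≤ p.2} ∪ {p | p.2 ≤ p.1} = univ := by
    ext p; simp [le_total]
  -- `P(X ≤ Y) + P(Y ≤ X) = 1 + P(X = Y)`, so ties are null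
  have hdiag : (μ.prod μ) ({p | p.1 ≤ p.2} ∩ {p | p.2 ≤ p.1}) = 0 := by
    have := measure_union_add_inter {p : ℝ × ℝ | p.1 ≤ p.2} hle (μ := μ.prod μ)
    rw [hunion, measure_univ, h, hswap, ENNReal.inv_two_add_inv_two] at this
    simpa using this
  refine ⟨fun s => mul_self_eq_zero.1 ?_⟩
  rw [← Measure.prod_prod]
  exact measure_mono_null (by rintro p ⟨h1, h2⟩; simp_all) hdiag

theorem measurePreserving_appendEquiv_symm {α : Type*} [MeasurableSpace α] (μ : Measure α)
    [SigmaFinite μ] (n r : ℕ) :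
    MeasurePreserving (Fin.appendEquiv n r).symm (Measure.pi fun _ => μ)
      ((Measure.pi fun _ => μ).prod (Measure.pi fun _ => μ)) := by
  have h := (measurePreserving_sumPiEquivProdPi (fun _ : Fin n ⊕ Fin r => μ)).comp
    (measurePreserving_piCongrLeft (fun _ => μ) finSumFinEquiv).symm
  convert h using 1
  funext x
  rfl

instance : IsProbabilityMeasure unif := ⟨by simp [unif, Real.volume_Icc]⟩

namespace SelfSelection

variable {S : ℝ → ℝ → ℝ} {k m n r : ℕ}

def wins (S : ℝ → ℝ → ℝ) (a : Fin n → ℝ) (j : Fin n) : Set (Fin n → ℝ) :=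
  {x | ∀ i, S (x j) (a j) ≤ S (x i) (a i)}

def IsBalanced (S : ℝ → ℝ → ℝ) : Prop :=
  ∀ n : ℕ, 0 < n → ∀ a : Fin n → ℝ, (∀ i, 0 < a i) →
    (∀ᵐ x ∂(Measure.pi fun _ : Fin n => unif), ∃! j : Fin n, x ∈ wins S a j) ∧
    ∀ j : Fin n, (Measure.pi fun _ : Fin n => unif) (wins S a j) = ENNReal.ofReal (a j / ∑ i, a i)

/-- For `n = 0` this is the junk value `sInf ∅ = 0`, hence the `NeZero` assumptions below. -/
noncomputable def minScore (S : ℝ → ℝ → ℝ) (a x : Fin n → ℝ) : ℝ := ⨅ i, S (x i) (a i)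

noncomputable def minScoreLaw (S : ℝ → ℝ → ℝ) (a : Fin n → ℝ) : Measure ℝ :=
  (Measure.pi fun _ => unif).map (minScore S a)

instance (a : Fin n → ℝ) : IsFiniteMeasure (minScoreLaw S a) := by
  unfold minScoreLaw
  infer_instance

theorem append_pos {a : Fin n → ℝ} {b : Fin r → ℝ} (ha : ∀ i, 0 < a i) (hb : ∀ i, 0 < b i) :
    ∀ i, 0 < Fin.append a b i :=
  (Fin.forall_fin_add _).2 ⟨by simpa using ha, by simpa using hb⟩

theorem minScore_le (a x : Fin n → ℝ) (i : Fin n) : minScore S a x ≤ S (x i) (a i) :=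
  ciInf_le (Finite.bddBelow_range _) i

theorem le_minScore_iff [NeZero n] {a x : Fin n → ℝ} {t : ℝ} :
    t ≤ minScore S a x ↔ ∀ i, t ≤ S (x i) (a i) :=
  le_ciInf_iff (Finite.bddBelow_range _)

theorem exists_eq_minScore [NeZero n] (a x : Fin n → ℝ) : ∃ j, S (x j) (a j) = minScore S a x :=
  exists_eq_ciInf_of_finite

section Measurable

variable (hSm : ∀ a : ℝ, Measurable fun x => S x a)
include hSm

theorem measurableSet_wins (a : Fin n → ℝ) (j : Fin n) : MeasurableSet (wins S a j) := by
  simp only [wins, ofPred_forall]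
  exact .iInter fun i =>
    measurableSet_le ((hSm _).comp (measurable_pi_apply j)) ((hSm _).comp (measurable_pi_apply i))

theorem measurable_minScore (a : Fin n → ℝ) : Measurable (minScore S a) :=
  .iInf fun i => (hSm (a i)).comp (measurable_pi_apply i)

theorem isProbabilityMeasure_minScoreLaw (a : Fin n → ℝ) : IsProbabilityMeasure (minScoreLaw S a) :=
  Measure.isProbabilityMeasure_map (measurable_minScore hSm a).aemeasurable

theorem minScoreLaw_fin_one (ρ : ℝ) :
    minScoreLaw S (fun _ : Fin 1 => ρ) = unif.map (fun x => S x ρ) := by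
  rw [← (measurePreserving_funUnique unif (Fin 1)).map_eq, Measure.map_map (hSm ρ)
    (MeasurableEquiv.measurable _), minScoreLaw]
  congr 1
  funext x
  simp [minScore]

theorem minScoreLaw_Ici [NeZero n] (a : Fin n → ℝ) (t : ℝ) :
    minScoreLaw S a (Ici t) = ∏ i, unif {y | t ≤ S y (a i)} := by
  rw [minScoreLaw, Measure.map_apply (measurable_minScore hSm a) measurableSet_Ici,
    ← Measure.pi_pi]
  congr 1
  ext x
  simp [le_minScore_iff]

theorem minScoreLaw_append_Ici [NeZero n] [NeZero r] (a : Fin n → ℝ) (b : Fin r → ℝ) (t : ℝ) :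
    minScoreLaw S (Fin.append a b) (Ici t) = minScoreLaw S a (Ici t) * minScoreLaw S b (Ici t) := by
  simp [minScoreLaw_Ici hSm, Fin.prod_univ_add]

end Measurable

theorem mem_iUnion_wins_append_iff [NeZero n] [NeZero r] (a : Fin n → ℝ) (b : Fin r → ℝ)
    (x : Fin (n + r) → ℝ) :
    x ∈ ⋃ j, wins S (Fin.append a b) (Fin.castAdd r j) ↔
      minScore S a (fun j => x (Fin.castAdd r j)) ≤ minScore S b (fun i => x (Fin.natAdd n i)) := by
  simp only [mem_iUnion, wins, mem_ofPred_eq, Fin.append_left, Fin.forall_fin_add,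
    Fin.append_right]
  constructor
  · rintro ⟨j, -, hj⟩
    exact le_minScore_iff.2 fun i => (minScore_le _ _ j).trans (hj i)
  · intro h
    obtain ⟨j, hj⟩ := exists_eq_minScore (S := S) a fun j => x (Fin.castAdd r j)
    exact ⟨j, fun i => hj.le.trans (minScore_le _ _ i),
      fun i => hj.le.trans (h.trans (minScore_le _ _ i))⟩

section Balanced

variable (hS : IsBalanced S) (hSm : ∀ a : ℝ, Measurable fun x => S x a)
include hS hSm

theorem measure_iUnion_wins [NeZero m] {a : Fin m → ℝ} (ha : ∀ i, 0 < a i) {e : Fin k → Fin m}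
    (he : Function.Injective e) :
    (Measure.pi fun _ => unif) (⋃ j, wins S a (e j)) =
      ENNReal.ofReal ((∑ j, a (e j)) / ∑ i, a i) := by
  obtain ⟨huniq, hwin⟩ := hS m (Nat.pos_of_neZero m) a ha
  have hdisj : Pairwise (Function.onFun (AEDisjoint (Measure.pi fun _ => unif))
      fun j => wins S a (e j)) := by
    intro j j' hne
    refine measure_mono_null ?_ (ae_iff.1 huniq)
    rintro x ⟨h, h'⟩ ⟨_, _, hk⟩
    exact hne (he ((hk _ h).trans (hk _ h').symm))
  rw [measure_iUnion₀ hdisj fun j => (measurableSet_wins hSm a (e j)).nullMeasurableSet,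
    tsum_fintype, Finset.sum_div, ENNReal.ofReal_sum_of_nonneg fun j _ =>
      div_nonneg (ha _).le (Finset.sum_nonneg fun i _ => (ha i).le)]
  exact Finset.sum_congr rfl fun j _ => hwin (e j)

theorem prod_minScoreLaw_le [NeZero n] [NeZero r] {a : Fin n → ℝ} {b : Fin r → ℝ}
    (ha : ∀ i, 0 < a i) (hb : ∀ i, 0 < b i) :
    ((minScoreLaw S a).prod (minScoreLaw S b)) {p | p.1 ≤ p.2} =
      ENNReal.ofReal ((∑ i, a i) / ((∑ i, a i) + ∑ i, b i)) := by
  have hmeas := (measurable_minScore hSm a).prodMap (measurable_minScore hSm b)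
  have hset : (Fin.appendEquiv n r).symm ⁻¹'
      (Prod.map (minScore S a) (minScore S b) ⁻¹' {p | p.1 ≤ p.2}) =
      ⋃ j, wins S (Fin.append a b) (Fin.castAdd r j) := by
    ext x
    exact (mem_iUnion_wins_append_iff a b x).symm
  have hle : MeasurableSet {p : ℝ × ℝ | p.1 ≤ p.2} := measurableSet_le measurable_fst measurable_snd
  rw [minScoreLaw, minScoreLaw, Measure.map_prod_map _ _ (measurable_minScore hSm a)
    (measurable_minScore hSm b), Measure.map_apply hmeas hle,
    ← (measurePreserving_appendEquiv_symm unif n r).measure_preimage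
      (hmeas hle).nullMeasurableSet, hset,
    measure_iUnion_wins hS hSm (append_pos ha hb) (Fin.castAdd_injective n r)]
  simp [Fin.sum_univ_add]

theorem nullSingletonClass_minScoreLaw [NeZero n] {a : Fin n → ℝ} (ha : ∀ i, 0 < a i) :
    NullSingletonClass (minScoreLaw S a) := by
  have := isProbabilityMeasure_minScoreLaw hSm a
  refine nullSingletonClass_of_prod_le_eq_half _ ?_
  rw [prod_minScoreLaw_le hS hSm ha ha, ← two_mul, div_mul_cancel_right₀
    (Finset.sum_pos (fun i _ => ha i) Finset.univ_nonempty).ne', ENNReal.ofReal_inv_of_pos two_pos]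
  simp

theorem lintegral_minScoreLaw_Ici_mul [NeZero m] [NeZero n] [NeZero r] {d : Fin m → ℝ}
    {b : Fin n → ℝ} {b' : Fin r → ℝ} (hd : ∀ i, 0 < d i) (hb : ∀ i, 0 < b i) (hb' : ∀ i, 0 < b' i) :
    ∫⁻ s, minScoreLaw S b (Ici s) * minScoreLaw S b' (Ici s) ∂minScoreLaw S d =
      ENNReal.ofReal ((∑ i, d i) / ((∑ i, d i) + ((∑ i, b i) + ∑ i, b' i))) := by
  simp_rw [← minScoreLaw_append_Ici hSm]
  rw [lintegral_measure_Ici_eq_prod, prod_minScoreLaw_le hS hSm hd (append_pos hb hb'),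
    Fin.sum_univ_add]
  simp

theorem minScoreLaw_Ici_ae_eq [NeZero m] [NeZero n] [NeZero r] {d : Fin m → ℝ} {b : Fin n → ℝ}
    {b' : Fin r → ℝ} (hd : ∀ i, 0 < d i) (hb : ∀ i, 0 < b i) (hb' : ∀ i, 0 < b' i)
    (hbd : ∑ i, b i = ∑ i, d i) (hb'd : ∑ i, b' i = ∑ i, d i) :
    (fun s => minScoreLaw S b (Ici s)) =ᵐ[minScoreLaw S d] fun s => minScoreLaw S b' (Ici s) := by
  have hmeas (ρ : Measure ℝ) : Measurable fun s => ρ (Ici s) :=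
    Antitone.measurable fun _ _ h => measure_mono (Ici_subset_Ici.2 h)
  refine ae_eq_of_lintegral_mul_self_eq (hmeas _) (hmeas _) (fun _ => measure_ne_top _ _)
    (fun _ => measure_ne_top _ _) ?_ ?_ ?_
  · rw [lintegral_minScoreLaw_Ici_mul hS hSm hd hb hb']
    exact ENNReal.ofReal_ne_top
  · rw [lintegral_minScoreLaw_Ici_mul hS hSm hd hb hb,
      lintegral_minScoreLaw_Ici_mul hS hSm hd hb hb', hbd, hb'd]
  · rw [lintegral_minScoreLaw_Ici_mul hS hSm hd hb' hb',
      lintegral_minScoreLaw_Ici_mul hS hSm hd hb hb', hbd, hb'd]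

theorem minScoreLaw_eq_of_sum_eq [NeZero n] [NeZero r] {a : Fin n → ℝ} {b : Fin r → ℝ}
    (ha : ∀ i, 0 < a i) (hb : ∀ i, 0 < b i) (hab : ∑ i, a i = ∑ i, b i) :
    minScoreLaw S a = minScoreLaw S b := by
  have := nullSingletonClass_minScoreLaw hS hSm ha
  have := nullSingletonClass_minScoreLaw hS hSm hb
  exact Measure.eq_of_ae_measure_Ici_eq (minScoreLaw_Ici_ae_eq hS hSm ha ha hb rfl hab.symm)
    (minScoreLaw_Ici_ae_eq hS hSm hb ha hb hab rfl)

end Balanced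

end SelfSelection

/-- Any balanced scoring function `S` (each account wins with probability proportional to
its stake, with an a.s. unique minimizer, when credentials are i.i.d. uniform on `[0,1]`)
satisfies: `S(X, α_1 + ⋯ + α_n)` and `min_i S(X_i, α_i)` are identically distributed for
`X, X_1, …, X_n` i.i.d. uniform on `[0,1]` — merging stakes does not change the
distribution of the minimum score. -/
theorem stmt_16 (S : ℝ → ℝ → ℝ) (hSm : ∀ a : ℝ, Measurable fun x => S x a)
    (hbal : ∀ n : ℕ, 0 < n → ∀ a : Fin n → ℝ, (∀ i, 0 < a i) →
      (∀ᵐ x ∂(Measure.pi fun _ : Fin n => unif),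
        ∃! j : Fin n, ∀ i, S (x j) (a j) ≤ S (x i) (a i)) ∧
      ∀ j : Fin n,
        (Measure.pi fun _ : Fin n => unif) {x | ∀ i, S (x j) (a j) ≤ S (x i) (a i)} =
          ENNReal.ofReal (a j / ∑ i, a i)) :
    ∀ n : ℕ, 0 < n → ∀ a : Fin n → ℝ, (∀ i, 0 < a i) →
      Measure.map (fun x : ℝ => S x (∑ i, a i)) unif =
        Measure.map (fun x : Fin n → ℝ => ⨅ i, S (x i) (a i))
          (Measure.pi fun _ : Fin n => unif) := by
  intro n hn a ha
  have : NeZero n := ⟨hn.ne'⟩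
  rw [← SelfSelection.minScoreLaw_fin_one hSm]
  exact SelfSelection.minScoreLaw_eq_of_sum_eq hbal hSm (fun _ => Finset.sum_pos (fun i _ => ha i)
    Finset.univ_nonempty) ha (by simp)
end
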